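/- arXiv:1609.02814 — 9 statements merged into one kernel-verified Lean document; each statement's English description precedes it below -/
import Mathlib

section
/- Let I and J be finite index sets, μ a probability vector on I, c a real I×J matrix, f_j : ℝ → ℝ nondecreasing continuous functions with primitives F_j, and φ a symmetric J×J real matrix. Define E(ν) = Σ_j F_j(ν_j) + (1/2) Σ_{k,j} φ_{kj} ν_k ν_j on the simplex P(Y) of probability vectors on J, and MK(ν) = inf over nonnegative I×J matrices γ with row sums μ and column sums ν of Σ_{ij} c_{ij} γ_{ij}. If ν minimizes MK + E over P(Y) and γ is an optimal transport plan achieving MK(ν), then γ is a Cournot-Nash equilibrium: for all i,j, γ_{ij} > 0 implies c_{ij} + f_j(ν_j) + Σ_k φ_{kj} ν_k = min over j' of (c_{ij'} + f_{j'}(ν_{j'}) + Σ_k φ_{kj'} ν_k). -/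
open Finset

lemma sum_delta_mul {J : Type*} [Fintype J] [DecidableEq J] {j0 j1 : J} (h : j0 ≠ j1)
    (ε : ℝ) (g : J → ℝ) :
    ∑ j, g j * (if j = j1 then ε else if j = j0 then -ε else 0) = ε * (g j1 - g j0) := by
  have key : ∀ j : J, g j * (if j = j1 then ε else if j = j0 then -ε else 0)
      = (if j1 = j then g j * ε else 0) + (if j0 = j then -(g j * ε) else 0) := by
    intro j
    by_cases h1 : j = j1
    · subst h1; simp [h, h.symm]
    · by_cases h0 : j = j0
      · subst h0; simp [h1, Ne.symm h1]
      · simp [h1, h0, Ne.symm h1, Ne.symm h0]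
  simp only [key, Finset.sum_add_distrib, Finset.sum_ite_eq, Finset.mem_univ, if_true]
  ring

theorem cournot_nash_from_minimizer
    {I J : Type*} [Fintype I] [Fintype J] [Nonempty J]
    (μ : I → ℝ) (hμ0 : ∀ i, 0 ≤ μ i) (hμ1 : ∑ i, μ i = 1)
    (c : I → J → ℝ)
    (f : J → ℝ → ℝ) (hf_mono : ∀ j, Monotone (f j)) (hf_cont : ∀ j, Continuous (f j))
    (F : J → ℝ → ℝ) (hF : ∀ j t, F j t = ∫ s in (0:ℝ)..t, f j s)
    (φ : J → J → ℝ) (hφ : ∀ k j, φ k j = φ j k)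
    (E : (J → ℝ) → ℝ)
    (hE : ∀ ν, E ν = ∑ j, F j (ν j) + (1/2) * ∑ k, ∑ j, φ k j * ν k * ν j)
    (MK : (J → ℝ) → ℝ)
    (hMK : ∀ ν, MK ν = sInf ((fun γ : I → J → ℝ => ∑ i, ∑ j, c i j * γ i j) ''
      {γ | (∀ i j, 0 ≤ γ i j) ∧ (∀ i, ∑ j, γ i j = μ i) ∧ (∀ j, ∑ i, γ i j = ν j)}))
    (ν : J → ℝ) (hν0 : ∀ j, 0 ≤ ν j) (hν1 : ∑ j, ν j = 1)
    (hmin : ∀ ν' : J → ℝ, (∀ j, 0 ≤ ν' j) → ∑ j, ν' j = 1 →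
      MK ν + E ν ≤ MK ν' + E ν')
    (γ : I → J → ℝ)
    (hγ0 : ∀ i j, 0 ≤ γ i j) (hγ1 : ∀ i, ∑ j, γ i j = μ i)
    (hγ2 : ∀ j, ∑ i, γ i j = ν j)
    (hopt : ∑ i, ∑ j, c i j * γ i j = MK ν) :
    ∀ i j, 0 < γ i j →
      c i j + f j (ν j) + ∑ k, φ k j * ν k =
        Finset.univ.inf' Finset.univ_nonempty
          (fun j' => c i j' + f j' (ν j') + ∑ k, φ k j' * ν k) := by
  classical
  intro i0 j0 hpos
  set A : J → ℝ := fun j => ∑ k, φ k j * ν k with hA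
  set Ψ : J → ℝ := fun j => c i0 j + f j (ν j) + A j with hΨ
  show Ψ j0 = Finset.univ.inf' Finset.univ_nonempty Ψ
  have hle : Finset.univ.inf' Finset.univ_nonempty Ψ ≤ Ψ j0 :=
    Finset.inf'_le _ (Finset.mem_univ _)
  rcases eq_or_lt_of_le hle with heq | hlt
  · exact heq.symm
  exfalso
  obtain ⟨j1, -, hj1⟩ := Finset.exists_mem_eq_inf' (Finset.univ_nonempty) Ψ
  have hΨlt : Ψ j1 < Ψ j0 := by rw [← hj1]; exact hlt
  have hne : j0 ≠ j1 := by rintro rfl; exact lt_irrefl _ hΨlt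
  have hε0pos : 0 < γ i0 j0 := hpos
  have hε0ν : γ i0 j0 ≤ ν j0 := by
    rw [← hγ2 j0]
    exact Finset.single_le_sum (fun i _ => hγ0 i j0) (Finset.mem_univ i0)
  set Qc : ℝ := (φ j1 j1 - φ j0 j1 - φ j1 j0 + φ j0 j0) / 2 with hQc
  -- the key inequality for small ε
  have key : ∀ ε : ℝ, 0 < ε → ε ≤ γ i0 j0 →
      0 ≤ (c i0 j1 + f j1 (ν j1 + ε) + A j1)
          - (c i0 j0 + f j0 (ν j0 - ε) + A j0) + ε * Qc := by
    intro ε hε hεle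
    set d : J → ℝ := fun j => if j = j1 then ε else if j = j0 then -ε else 0 with hd
    set ν' : J → ℝ := fun j => ν j + d j with hν'
    set γ' : I → J → ℝ := fun i j => γ i j + if i = i0 then d j else 0 with hγ'
    have hd_j1 : d j1 = ε := by simp [hd]
    have hd_j0 : d j0 = -ε := by simp [hd, hne]
    have hd_other : ∀ j, j ≠ j0 → j ≠ j1 → d j = 0 := by
      intro j h0 h1; simp [hd, h0, h1]
    have hsum_d : ∀ g : J → ℝ, ∑ j, g j * d j = ε * (g j1 - g j0) := fun g =>
      sum_delta_mul hne ε g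
    have hsum_d' : ∑ j, d j = 0 := by
      have := hsum_d (fun _ => 1)
      simpa using this
    -- ν' is a probability vector
    have hν'0 : ∀ j, 0 ≤ ν' j := by
      intro j
      by_cases h1 : j = j1
      · rw [hν']; dsimp only; rw [h1, hd_j1]; linarith [hν0 j1]
      · by_cases h0 : j = j0
        · rw [hν']; dsimp only; rw [h0, hd_j0]; linarith [hε0ν]
        · rw [hν']; dsimp only; rw [hd_other j h0 h1]; linarith [hν0 j]
    have hν'1 : ∑ j, ν' j = 1 := by
      rw [hν']; dsimp only
      rw [Finset.sum_add_distrib, hν1, hsum_d', add_zero]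
    -- γ' is feasible for ν'
    have hγ'0 : ∀ i j, 0 ≤ γ' i j := by
      intro i j
      rw [hγ']; dsimp only
      by_cases hi : i = i0
      · rw [if_pos hi]
        by_cases h1 : j = j1
        · rw [h1, hd_j1]; linarith [hγ0 i j1]
        · by_cases h0 : j = j0
          · rw [h0, hd_j0, hi]; linarith
          · rw [hd_other j h0 h1]; linarith [hγ0 i j]
      · rw [if_neg hi, add_zero]; exact hγ0 i j
    have hγ'1 : ∀ i, ∑ j, γ' i j = μ i := by
      intro i
      rw [hγ']; dsimp only
      rw [Finset.sum_add_distrib, hγ1]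
      by_cases hi : i = i0
      · subst hi; simp [hsum_d']
      · simp [hi]
    have hγ'2 : ∀ j, ∑ i, γ' i j = ν' j := by
      intro j
      rw [hγ', hν']; dsimp only
      rw [Finset.sum_add_distrib, hγ2]
      congr 1
      rw [Finset.sum_ite_eq' Finset.univ i0 (fun _ => d j)]
      simp
    -- cost of γ'
    have hcost : ∑ i, ∑ j, c i j * γ' i j = MK ν + ε * (c i0 j1 - c i0 j0) := by
      rw [hγ']; dsimp only
      have : ∀ i, ∑ j, c i j * (γ i j + if i = i0 then d j else 0)
          = (∑ j, c i j * γ i j) + (if i = i0 then ∑ j, c i j * d j else 0) := by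
        intro i
        by_cases hi : i = i0
        · simp only [if_pos hi, mul_add, Finset.sum_add_distrib]
        · simp only [if_neg hi, mul_zero, add_zero]
      simp only [this]
      rw [Finset.sum_add_distrib, hopt]
      congr 1
      rw [Finset.sum_ite_eq' Finset.univ i0 (fun i => ∑ j, c i j * d j)]
      simp [hsum_d (c i0)]
    -- MK ν' ≤ cost of γ'
    have hMKle : MK ν' ≤ MK ν + ε * (c i0 j1 - c i0 j0) := by
      rw [hMK ν', ← hcost]
      apply csInf_le
      · -- bounded below
        refine ⟨-∑ i, ∑ j, |c i j|, ?_⟩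
        rintro x ⟨g, ⟨hg0, hg1, hg2⟩, rfl⟩
        dsimp only
        rw [← Finset.sum_neg_distrib]
        apply Finset.sum_le_sum
        intro i _
        rw [← Finset.sum_neg_distrib]
        apply Finset.sum_le_sum
        intro j _
        have hgle1 : g i j ≤ 1 := by
          have h1 : g i j ≤ μ i := by
            rw [← hg1 i]
            exact Finset.single_le_sum (fun j _ => hg0 i j) (Finset.mem_univ j)
          have h2 : μ i ≤ 1 := by
            rw [← hμ1]
            exact Finset.single_le_sum (fun i _ => hμ0 i) (Finset.mem_univ i)
          linarith
        have habs : |c i j * g i j| ≤ |c i j| := by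
          rw [abs_mul]
          exact mul_le_of_le_one_right (abs_nonneg _)
            (by rw [abs_of_nonneg (hg0 i j)]; exact hgle1)
        linarith [neg_abs_le (c i j * g i j), habs]
      · exact ⟨γ', ⟨hγ'0, hγ'1, hγ'2⟩, rfl⟩
    -- E ν' - E ν
    have hInt : ∀ (j : J) (a b : ℝ), IntervalIntegrable (f j) MeasureTheory.volume a b :=
      fun j a b => (hf_cont j).intervalIntegrable a b
    have hF1 : F j1 (ν j1 + ε) - F j1 (ν j1) ≤ ε * f j1 (ν j1 + ε) := by
      rw [hF, hF]
      rw [intervalIntegral.integral_interval_sub_left (hInt j1 0 (ν j1 + ε)) (hInt j1 0 (ν j1))]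
      calc (∫ s in (ν j1)..(ν j1 + ε), f j1 s)
          ≤ ∫ _ in (ν j1)..(ν j1 + ε), f j1 (ν j1 + ε) := by
            apply intervalIntegral.integral_mono_on (by linarith) (hInt j1 _ _)
              intervalIntegrable_const
            intro x hx
            exact hf_mono j1 hx.2
        _ = ε * f j1 (ν j1 + ε) := by
            rw [intervalIntegral.integral_const, smul_eq_mul]
            ring
    have hF0 : F j0 (ν j0 - ε) - F j0 (ν j0) ≤ -(ε * f j0 (ν j0 - ε)) := by
      rw [hF, hF]
      rw [intervalIntegral.integral_interval_sub_left (hInt j0 0 (ν j0 - ε)) (hInt j0 0 (ν j0))]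
      rw [intervalIntegral.integral_symm]
      have : ε * f j0 (ν j0 - ε) ≤ ∫ s in (ν j0 - ε)..(ν j0), f j0 s := by
        calc ε * f j0 (ν j0 - ε)
            = ∫ _ in (ν j0 - ε)..(ν j0), f j0 (ν j0 - ε) := by
              rw [intervalIntegral.integral_const, smul_eq_mul]; ring
          _ ≤ ∫ s in (ν j0 - ε)..(ν j0), f j0 s := by
              apply intervalIntegral.integral_mono_on (by linarith) intervalIntegrable_const
                (hInt j0 _ _)
              intro x hx
              exact hf_mono j0 hx.1
      linarith
    have hFsum : ∑ j, F j (ν' j) = ∑ j, F j (ν j)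
        + ((F j1 (ν j1 + ε) - F j1 (ν j1)) + (F j0 (ν j0 - ε) - F j0 (ν j0))) := by
      have keyF : ∀ j : J, F j (ν' j) = F j (ν j)
          + ((if j1 = j then F j1 (ν j1 + ε) - F j1 (ν j1) else 0)
            + (if j0 = j then F j0 (ν j0 - ε) - F j0 (ν j0) else 0)) := by
        intro j
        by_cases h1 : j = j1
        · rw [hν']; dsimp only
          rw [h1, hd_j1, if_pos rfl, if_neg hne]
          ring
        · by_cases h0 : j = j0
          · rw [hν']; dsimp only
            rw [h0, hd_j0, if_pos rfl, if_neg (fun hh => hne hh.symm)]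
            ring
          · rw [hν']; dsimp only
            rw [hd_other j h0 h1, if_neg (fun hh => h1 hh.symm), if_neg (fun hh => h0 hh.symm)]
            ring
      simp only [keyF, Finset.sum_add_distrib, Finset.sum_ite_eq, Finset.mem_univ, if_true]
    have hquad : ∑ k, ∑ j, φ k j * ν' k * ν' j
        = (∑ k, ∑ j, φ k j * ν k * ν j) + 2 * (ε * (A j1 - A j0)) + ε * ε * (2 * Qc) := by
      have expand : ∀ k j : J, φ k j * ν' k * ν' j = φ k j * ν k * ν j
          + (φ k j * ν k) * d j + (φ k j * ν j) * d k + (φ k j * d k) * d j := by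
        intro k j; rw [hν']; dsimp only; ring
      have hS1 : ∑ k, ∑ j, (φ k j * ν k) * d j = ε * (A j1 - A j0) := by
        rw [Finset.sum_comm]
        have hin : ∀ j, ∑ k, (φ k j * ν k) * d j = A j * d j := by
          intro j; rw [hA]; dsimp only; rw [Finset.sum_mul]
        simp only [hin]
        exact hsum_d A
      have hS2 : ∑ k, ∑ j, (φ k j * ν j) * d k = ε * (A j1 - A j0) := by
        have hin : ∀ k, ∑ j, (φ k j * ν j) * d k = A k * d k := by
          intro k
          rw [← Finset.sum_mul]
          congr 1
          rw [hA]; dsimp only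
          exact Finset.sum_congr rfl (fun j _ => by rw [hφ k j])
        simp only [hin]
        exact hsum_d A
      have hS3 : ∑ k, ∑ j, (φ k j * d k) * d j
          = ε * ε * (φ j1 j1 - φ j1 j0 - φ j0 j1 + φ j0 j0) := by
        have hin : ∀ k, ∑ j, (φ k j * d k) * d j = d k * (ε * (φ k j1 - φ k j0)) := by
          intro k
          rw [← hsum_d (fun j => φ k j), Finset.mul_sum]
          exact Finset.sum_congr rfl (fun j _ => by ring)
        simp only [hin]
        rw [show (∑ k, d k * (ε * (φ k j1 - φ k j0)))
            = ∑ k, (ε * (φ k j1 - φ k j0)) * d k from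
          Finset.sum_congr rfl (fun k _ => mul_comm _ _)]
        rw [hsum_d (fun k => ε * (φ k j1 - φ k j0))]
        ring
      simp only [expand, Finset.sum_add_distrib]
      rw [hS1, hS2, hS3, hQc]
      ring
    have hEdiff : E ν' - E ν ≤ ε * f j1 (ν j1 + ε) - ε * f j0 (ν j0 - ε)
        + ε * (A j1 - A j0) + ε * ε * Qc := by
      rw [hE ν', hE ν, hFsum, hquad]
      linarith [hF1, hF0]
    have hmain := hmin ν' hν'0 hν'1
    have h0le : 0 ≤ ε * ((c i0 j1 + f j1 (ν j1 + ε) + A j1)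
        - (c i0 j0 + f j0 (ν j0 - ε) + A j0) + ε * Qc) := by
      nlinarith [hMKle, hEdiff, hmain]
    exact nonneg_of_mul_nonneg_right h0le hε
  -- take the limit ε → 0⁺
  set h : ℝ → ℝ := fun ε => (c i0 j1 + f j1 (ν j1 + ε) + A j1)
      - (c i0 j0 + f j0 (ν j0 - ε) + A j0) + ε * Qc with hh
  have hcont : Continuous h := by
    apply Continuous.add
    apply Continuous.sub
    · exact (continuous_const.add ((hf_cont j1).comp (continuous_const.add continuous_id))).add
        continuous_const
    · exact (continuous_const.add ((hf_cont j0).comp (continuous_const.sub continuous_id))).add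
        continuous_const
    · exact continuous_id.mul continuous_const
  have htend : Filter.Tendsto h (nhdsWithin 0 (Set.Ioi 0)) (nhds (Ψ j1 - Ψ j0)) := by
    have : h 0 = Ψ j1 - Ψ j0 := by simp [hh, hΨ]
    rw [← this]
    exact (hcont.tendsto 0).mono_left nhdsWithin_le_nhds
  have hev : ∀ᶠ ε in nhdsWithin 0 (Set.Ioi 0), 0 ≤ h ε := by
    filter_upwards [Ioc_mem_nhdsGT_of_mem (Set.mem_Ico.mpr ⟨le_refl 0, hε0pos⟩)] with ε hε
    exact key ε hε.1 hε.2
  have := ge_of_tendsto htend hev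
  linarith [hΨlt, this]
end

section
/- With I, J finite, μ a probability vector on I, c ∈ ℝ^{I×J}, f_j nondecreasing continuous, and φ symmetric, there exists a Cournot-Nash equilibrium, i.e., a nonnegative γ with row sums μ such that whenever γ_{ij} > 0, the cost c_{ij} + f_j(ν_j) + Σ_k φ_{kj} ν_k equals min_{j'} (c_{ij'} + f_{j'}(ν_{j'}) + Σ_k φ_{kj'} ν_k), where ν is the column-sum vector of γ. -/
/-!
The game has a potential. With `F j` a primitive of `f j` and `ν` the column sums of a plan `γ`,
`Φ γ = ∑ i j, c i j * γ i j + ∑ j, F j (ν j) + ½ ∑ k j, φ k j * ν k * ν j`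
is continuous on the compact set of plans with row sums `μ`, so it has a minimizer. Moving mass
`t ∈ [0, γ i j]` from `(i, j)` to `(i, j')` keeps the plan admissible, and, φ being symmetric, the
derivative of `Φ` along this move at `t = 0` is the difference of the costs of `j'` and `j` for
type `i`; minimality makes it nonnegative.
-/

open Finset Filter Topology

namespace CournotNash

noncomputable section

variable {I J : Type*}

def plans [Fintype J] (μ : I → ℝ) : Set (I → J → ℝ) :=
  {γ | (∀ i j, 0 ≤ γ i j) ∧ ∀ i, ∑ j, γ i j = μ i}

def marginal [Fintype I] (γ : I → J → ℝ) (j : J) : ℝ := ∑ i, γ i j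

def energy [Fintype J] (F : J → ℝ → ℝ) (φ : J → J → ℝ) (ν : J → ℝ) : ℝ :=
  ∑ j, F j (ν j) + 1 / 2 * ∑ k, ∑ j, φ k j * ν k * ν j

def potential [Fintype I] [Fintype J] (c : I → J → ℝ) (F : J → ℝ → ℝ) (φ : J → J → ℝ)
    (γ : I → J → ℝ) : ℝ :=
  ∑ i, ∑ j, c i j * γ i j + energy F φ (marginal γ)

def cost [Fintype I] [Fintype J] (c : I → J → ℝ) (f : J → ℝ → ℝ) (φ : J → J → ℝ)
    (γ : I → J → ℝ) (i : I) (j : J) : ℝ :=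
  c i j + f j (marginal γ j) + ∑ k, φ k j * marginal γ k

theorem isCompact_plans [Fintype J] (μ : I → ℝ) : IsCompact (plans (J := J) μ) := by
  have hclosed : IsClosed (plans (J := J) μ) := by
    simp only [plans, Set.ofPred_and, Set.ofPred_forall]
    refine .inter (isClosed_iInter fun i => isClosed_iInter fun j => ?_)
      (isClosed_iInter fun i => isClosed_eq (by fun_prop) continuous_const)
    exact isClosed_le continuous_const (by fun_prop)
  refine (isCompact_univ_pi fun i => isCompact_univ_pi fun _ => isCompact_Icc (a := 0)
    (b := μ i)).of_isClosed_subset hclosed fun γ ⟨hnonneg, hrow⟩ => ?_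
  simp only [Set.mem_univ_pi, Set.mem_Icc]
  exact fun i j => ⟨hnonneg i j, hrow i ▸ single_le_sum (fun j _ => hnonneg i j) (mem_univ j)⟩

theorem plans_nonempty [Fintype J] [Nonempty J] {μ : I → ℝ} (hμ : ∀ i, 0 ≤ μ i) :
    (plans (J := J) μ).Nonempty := by
  classical
  obtain ⟨j₀⟩ := ‹Nonempty J›
  refine ⟨fun i => Pi.single j₀ (μ i), fun i j => ?_, fun i => by simp⟩
  by_cases h : j = j₀ <;> simp [h, hμ i]

theorem continuous_potential [Fintype I] [Fintype J] (c : I → J → ℝ) {F : J → ℝ → ℝ}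
    (hF : ∀ j, Continuous (F j)) (φ : J → J → ℝ) : Continuous (potential c F φ) := by
  unfold potential energy marginal
  fun_prop

theorem _root_.HasDerivAt.nonneg_of_eventually_le {ψ : ℝ → ℝ} {d : ℝ} (hψ : HasDerivAt ψ d 0)
    (hmin : ∀ᶠ t in 𝓝[>] 0, ψ 0 ≤ ψ t) : 0 ≤ d := by
  refine ge_of_tendsto hψ.tendsto_slope_zero_right ?_
  filter_upwards [hmin, self_mem_nhdsWithin] with t hle (ht : 0 < t)
  simpa using smul_nonneg (inv_nonneg.2 ht.le) (sub_nonneg.2 hle)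

theorem hasDerivAt_energy_line [Fintype J] {F f : J → ℝ → ℝ}
    (hF : ∀ j x, HasDerivAt (F j) (f j x) x) {φ : J → J → ℝ} (hφ : ∀ k j, φ k j = φ j k)
    (ν w : J → ℝ) :
    HasDerivAt (fun t : ℝ => energy F φ (ν + t • w))
      (∑ j, (f j (ν j) + ∑ k, φ k j * ν k) * w j) 0 := by
  have hline : ∀ j, HasDerivAt (fun t : ℝ => ν j + t * w j) (w j) 0 := fun j => by
    simpa using (hasDerivAt_mul_const (w j)).const_add (ν j)
  have hF' : ∀ j, HasDerivAt (fun t : ℝ => F j (ν j + t * w j)) (f j (ν j) * w j) 0 := fun j => by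
    simpa [Function.comp_def] using (hF j (ν j + 0 * w j)).comp (0 : ℝ) (hline j)
  have hQ : HasDerivAt (fun t : ℝ => ∑ k, ∑ j, φ k j * (ν k + t * w k) * (ν j + t * w j))
      (2 * ∑ j, (∑ k, φ k j * ν k) * w j) 0 := by
    refine (HasDerivAt.fun_sum (u := univ) fun k _ => HasDerivAt.fun_sum (u := univ) fun j _ =>
      ((hline k).const_mul (φ k j)).fun_mul (hline j)).congr_deriv ?_
    have hswap : ∑ k, ∑ j, φ k j * w k * ν j = ∑ j, ∑ k, φ k j * ν k * w j :=
      sum_congr rfl fun k _ => sum_congr rfl fun j _ => by rw [hφ]; ring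
    simp only [zero_mul, add_zero, sum_add_distrib, hswap]
    rw [sum_comm (f := fun k j => φ k j * ν k * w j), two_mul]
    simp only [sum_mul]
  unfold energy
  simp only [Pi.add_apply, Pi.smul_apply, smul_eq_mul]
  refine ((HasDerivAt.fun_sum (u := univ) fun j _ => hF' j).fun_add
    (hQ.const_mul (1 / 2))).congr_deriv ?_
  simp only [add_mul, sum_add_distrib]
  ring

theorem marginal_add_smul [Fintype I] (γ D : I → J → ℝ) (t : ℝ) :
    marginal (γ + t • D) = marginal γ + t • marginal D := by
  ext j
  simp [marginal, sum_add_distrib, mul_sum]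

theorem hasDerivAt_potential_line [Fintype I] [Fintype J] {F f : J → ℝ → ℝ}
    (hF : ∀ j x, HasDerivAt (F j) (f j x) x) {φ : J → J → ℝ} (hφ : ∀ k j, φ k j = φ j k)
    (c γ D : I → J → ℝ) :
    HasDerivAt (fun t : ℝ => potential c F φ (γ + t • D))
      (∑ i, ∑ j, cost c f φ γ i j * D i j) 0 := by
  have hlin : HasDerivAt (fun t : ℝ => ∑ i, ∑ j, c i j * (γ i j + t * D i j))
      (∑ i, ∑ j, c i j * D i j) 0 :=
    HasDerivAt.fun_sum fun i _ => HasDerivAt.fun_sum fun j _ => by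
      simpa using ((hasDerivAt_mul_const (D i j)).const_add (γ i j)).const_mul (c i j)
  unfold potential
  simp only [marginal_add_smul, Pi.add_apply, Pi.smul_apply, smul_eq_mul]
  refine (hlin.fun_add (hasDerivAt_energy_line hF hφ _ _)).congr_deriv ?_
  have hsplit : ∀ i j, cost c f φ γ i j * D i j =
      c i j * D i j + (f j (marginal γ j) + ∑ k, φ k j * marginal γ k) * D i j := fun i j => by
    simp only [cost]; ring
  simp only [hsplit, sum_add_distrib, add_right_inj]
  rw [sum_comm]
  simp only [marginal, mul_sum]

def transfer [DecidableEq I] [DecidableEq J] (i : I) (j j' : J) : I → J → ℝ :=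
  Pi.single i (Pi.single j' 1 - Pi.single j 1)

theorem sum_mul_transfer [Fintype I] [Fintype J] [DecidableEq I] [DecidableEq J]
    (g : I → J → ℝ) (i : I) (j j' : J) :
    ∑ i', ∑ l, g i' l * transfer i j j' i' l = g i j' - g i j := by
  simp [transfer, Pi.single_apply, ite_apply, mul_sub, sum_sub_distrib]

theorem add_smul_transfer_mem_plans [Fintype J] [DecidableEq I] [DecidableEq J] {μ : I → ℝ}
    {γ : I → J → ℝ} (hγ : γ ∈ plans μ) {i : I} {j : J} (j' : J) {t : ℝ} (ht₀ : 0 ≤ t)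
    (ht : t ≤ γ i j) : γ + t • transfer i j j' ∈ plans μ := by
  refine ⟨fun i' l => ?_, fun i' => ?_⟩
  · simp only [transfer, Pi.add_apply, Pi.smul_apply, smul_eq_mul, Pi.single_apply, ite_apply,
      Pi.sub_apply, Pi.zero_apply]
    have := hγ.1 i' l
    split_ifs <;> subst_vars <;> nlinarith
  · simp [transfer, Pi.single_apply, ite_apply, sum_add_distrib, mul_sub, sum_sub_distrib,
      hγ.2 i']

theorem cost_le_of_isMinOn [Fintype I] [Fintype J] {F f : J → ℝ → ℝ}
    (hF : ∀ j x, HasDerivAt (F j) (f j x) x) {φ : J → J → ℝ} (hφ : ∀ k j, φ k j = φ j k)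
    {c : I → J → ℝ} {μ : I → ℝ} {γ : I → J → ℝ} (hγ : γ ∈ plans μ)
    (hmin : IsMinOn (potential c F φ) (plans μ) γ) {i : I} {j : J} (hpos : 0 < γ i j)
    (j' : J) : cost c f φ γ i j ≤ cost c f φ γ i j' := by
  classical
  have hd := hasDerivAt_potential_line hF hφ c γ (transfer i j j')
  rw [sum_mul_transfer] at hd
  refine sub_nonneg.1 (hd.nonneg_of_eventually_le ?_)
  filter_upwards [Ioc_mem_nhdsGT hpos] with t ht
  simpa using hmin (add_smul_transfer_mem_plans hγ j' ht.1.le ht.2)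

end

end CournotNash

open CournotNash

theorem cournot_nash_exists_general
    {I J : Type*} [Fintype I] [Fintype J] [Nonempty J]
    (μ : I → ℝ) (hμ0 : ∀ i, 0 ≤ μ i)
    (c : I → J → ℝ)
    (f : J → ℝ → ℝ) (hf_cont : ∀ j, Continuous (f j))
    (φ : J → J → ℝ) (hφ : ∀ k j, φ k j = φ j k) :
    ∃ γ : I → J → ℝ, (∀ i j, 0 ≤ γ i j) ∧ (∀ i, ∑ j, γ i j = μ i) ∧
      ∀ i j, 0 < γ i j →
        c i j + f j (∑ i', γ i' j) + ∑ k, φ k j * (∑ i', γ i' k) =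
          Finset.univ.inf' Finset.univ_nonempty
            (fun j' => c i j' + f j' (∑ i', γ i' j') + ∑ k, φ k j' * (∑ i', γ i' k)) := by
  have hF : ∀ j x, HasDerivAt (fun x => ∫ t in (0 : ℝ)..x, f j t) (f j x) x := fun j x =>
    ((hf_cont j).integral_hasStrictDerivAt 0 x).hasDerivAt
  have hF_cont : ∀ j, Continuous fun x => ∫ t in (0 : ℝ)..x, f j t := fun j =>
    continuous_iff_continuousAt.2 fun x => (hF j x).continuousAt
  obtain ⟨γ, hγ, hmin⟩ := (isCompact_plans μ).exists_isMinOn (plans_nonempty hμ0)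
    (continuous_potential c hF_cont φ).continuousOn
  refine ⟨γ, hγ.1, hγ.2, fun i j hpos => le_antisymm ?_ (inf'_le _ (mem_univ j))⟩
  exact le_inf' _ _ fun j' _ => cost_le_of_isMinOn hF hφ hγ hmin hpos j'

theorem cournot_nash_exists
    {I J : Type*} [Fintype I] [Fintype J] [Nonempty J]
    (μ : I → ℝ) (hμ0 : ∀ i, 0 ≤ μ i) (hμ1 : ∑ i, μ i = 1)
    (c : I → J → ℝ)
    (f : J → ℝ → ℝ) (hf_mono : ∀ j, Monotone (f j)) (hf_cont : ∀ j, Continuous (f j))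
    (φ : J → J → ℝ) (hφ : ∀ k j, φ k j = φ j k) :
    ∃ γ : I → J → ℝ, (∀ i j, 0 ≤ γ i j) ∧ (∀ i, ∑ j, γ i j = μ i) ∧
      ∀ i j, 0 < γ i j →
        c i j + f j (∑ i', γ i' j) + ∑ k, φ k j * (∑ i', γ i' k) =
          Finset.univ.inf' Finset.univ_nonempty
            (fun j' => c i j' + f j' (∑ i', γ i' j') + ∑ k, φ k j' * (∑ i', γ i' k)) :=
  cournot_nash_exists_general μ hμ0 c f hf_cont φ hφ
end

section
/- For finite I, J, fixed probability vector μ on I and cost matrix c, the function ν ↦ MK(ν) (optimal transport cost from μ to ν) is Lipschitz continuous on the probability simplex of ℝ^J with Lipschitz constant at most 2·max_{i,j}|c_{ij}| in the ℓ¹ norm. -/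
open Finset

lemma MK_aux {I J : Type*} [Fintype I] [Fintype J]
    (μ : I → ℝ) (hμ1 : ∑ i, μ i = 1)
    (c : I → J → ℝ) (K : ℝ) (hK : ∀ i j, |c i j| ≤ K) (hK0 : 0 ≤ K)
    (ν ν' : J → ℝ) (hν0 : ∀ j, 0 ≤ ν j) (hν1 : ∑ j, ν j = 1)
    (hν'0 : ∀ j, 0 ≤ ν' j) (hν'1 : ∑ j, ν' j = 1)
    (γ' : I → J → ℝ) (hγ'0 : ∀ i j, 0 ≤ γ' i j)
    (hγ'r : ∀ i, ∑ j, γ' i j = μ i) (hγ'c : ∀ j, ∑ i, γ' i j = ν' j) :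
    ∃ γ : I → J → ℝ, (∀ i j, 0 ≤ γ i j) ∧ (∀ i, ∑ j, γ i j = μ i) ∧
      (∀ j, ∑ i, γ i j = ν j) ∧
      ∑ i, ∑ j, c i j * γ i j ≤ ∑ i, ∑ j, c i j * γ' i j + 2 * K * ∑ j, |ν j - ν' j| := by
  set p : J → ℝ := fun j => max (ν j - ν' j) 0 with hp
  have hp0 : ∀ j, 0 ≤ p j := fun j => le_max_right _ _
  set δ : ℝ := ∑ j, p j with hδdef
  have hδ0 : 0 ≤ δ := Finset.sum_nonneg fun j _ => hp0 j
  have hmin : ∀ j, min (ν j) (ν' j) = ν j - p j := by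
    intro j
    rcases le_total (ν j) (ν' j) with h | h
    · simp [hp, min_eq_left h, max_eq_right (by linarith : ν j - ν' j ≤ 0)]
    · simp [hp, min_eq_right h, max_eq_left (by linarith : 0 ≤ ν j - ν' j)]
  have hpabs : ∀ j, p j ≤ |ν j - ν' j| := fun j => max_le (le_abs_self _) (abs_nonneg _)
  have hδd : δ ≤ ∑ j, |ν j - ν' j| := Finset.sum_le_sum fun j _ => hpabs j
  by_cases hδz : δ = 0
  · -- then ν = ν'
    have hle : ∀ j, p j = 0 :=
      fun j => (Finset.sum_eq_zero_iff_of_nonneg (fun j _ => hp0 j)).mp hδz j (mem_univ j)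
    have hle' : ∀ j, ν j ≤ ν' j := by
      intro j
      have h := hle j
      by_contra h2
      push_neg at h2
      have : 0 < p j := lt_max_of_lt_left (by linarith)
      linarith
    have hνν' : ν = ν' := by
      funext j
      exact (Finset.sum_eq_sum_iff_of_le (fun j _ => hle' j)).mp
        (hν1.trans hν'1.symm) j (mem_univ j)
    refine ⟨γ', hγ'0, hγ'r, fun j => (hγ'c j).trans (by rw [hνν']), ?_⟩
    have hz : ∑ j, |ν j - ν' j| = 0 := by simp [hνν']
    rw [hz, mul_zero, add_zero]
  · have hδpos : 0 < δ := lt_of_le_of_ne hδ0 (Ne.symm hδz)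
    set m : J → ℝ := fun j => if ν' j = 0 then 0 else min (ν j) (ν' j) / ν' j with hm
    have hm0 : ∀ j, 0 ≤ m j := by
      intro j
      simp only [hm]
      split
      · exact le_refl 0
      · exact div_nonneg (le_min (hν0 j) (hν'0 j)) (hν'0 j)
    have hm1 : ∀ j, m j ≤ 1 := by
      intro j
      simp only [hm]
      split
      · norm_num
      · next h =>
        exact (div_le_one (lt_of_le_of_ne (hν'0 j) (Ne.symm h))).mpr (min_le_right _ _)
    have hmv : ∀ j, m j * ν' j = min (ν j) (ν' j) := by
      intro j
      simp only [hm]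
      split
      · next h => rw [h]; simp [min_eq_right (hν0 j)]
      · next h => field_simp
    have hsum_mv : ∑ j, m j * ν' j = 1 - δ := by
      calc ∑ j, m j * ν' j = ∑ j, (ν j - p j) := by
            refine Finset.sum_congr rfl fun j _ => ?_
            rw [hmv j, hmin j]
        _ = 1 - δ := by rw [Finset.sum_sub_distrib, hν1, hδdef]
    set r : I → ℝ := fun i => μ i - ∑ j, γ' i j * m j with hr
    have hγ'm_le : ∀ i j, γ' i j * m j ≤ γ' i j :=
      fun i j => mul_le_of_le_one_right (hγ'0 i j) (hm1 j)
    have hγ'm_0 : ∀ i j, 0 ≤ γ' i j * m j := fun i j => mul_nonneg (hγ'0 i j) (hm0 j)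
    have hr0 : ∀ i, 0 ≤ r i := by
      intro i
      have : ∑ j, γ' i j * m j ≤ ∑ j, γ' i j :=
        Finset.sum_le_sum fun j _ => hγ'm_le i j
      simp only [hr]
      rw [← hγ'r i]
      linarith
    have hcol_m : ∀ j, ∑ i, γ' i j * m j = m j * ν' j := by
      intro j
      rw [← Finset.sum_mul, hγ'c j, mul_comm]
    have hsr : ∑ i, r i = δ := by
      simp only [hr]
      rw [Finset.sum_sub_distrib, hμ1, Finset.sum_comm]
      have : ∑ j, ∑ i, γ' i j * m j = 1 - δ := by
        rw [Finset.sum_congr rfl fun j _ => hcol_m j, hsum_mv]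
      rw [this]; ring
    set γ : I → J → ℝ := fun i j => γ' i j * m j + r i * p j / δ with hγ
    have hγ0 : ∀ i j, 0 ≤ γ i j := fun i j =>
      add_nonneg (hγ'm_0 i j) (div_nonneg (mul_nonneg (hr0 i) (hp0 j)) hδ0)
    have hrow : ∀ i, ∑ j, γ i j = μ i := by
      intro i
      simp only [hγ]
      rw [Finset.sum_add_distrib]
      have h1 : ∑ j, r i * p j / δ = r i := by
        rw [← Finset.sum_div, ← Finset.mul_sum, ← hδdef, mul_div_assoc,
          div_self hδz, mul_one]
      rw [h1]
      simp only [hr]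
      ring
    have hcol : ∀ j, ∑ i, γ i j = ν j := by
      intro j
      simp only [hγ]
      rw [Finset.sum_add_distrib, hcol_m j, hmv j, hmin j]
      have h1 : ∑ i, r i * p j / δ = p j := by
        rw [← Finset.sum_div, ← Finset.sum_mul, hsr, mul_comm, mul_div_assoc,
          div_self hδz, mul_one]
      rw [h1]; ring
    refine ⟨γ, hγ0, hrow, hcol, ?_⟩
    -- cost bound
    have hterm : ∀ i j, c i j * γ i j - c i j * γ' i j ≤
        K * (γ' i j * (1 - m j) + r i * p j / δ) := by
      intro i j
      have hb0 : 0 ≤ γ' i j * (1 - m j) := mul_nonneg (hγ'0 i j) (by linarith [hm1 j])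
      have ha0 : 0 ≤ r i * p j / δ := div_nonneg (mul_nonneg (hr0 i) (hp0 j)) hδ0
      have hdiff : γ i j - γ' i j = r i * p j / δ - γ' i j * (1 - m j) := by
        simp only [hγ]; ring
      have habs : |γ i j - γ' i j| ≤ γ' i j * (1 - m j) + r i * p j / δ := by
        rw [hdiff]
        rw [abs_le]
        constructor <;> linarith
      calc c i j * γ i j - c i j * γ' i j = c i j * (γ i j - γ' i j) := by ring
        _ ≤ |c i j * (γ i j - γ' i j)| := le_abs_self _
        _ = |c i j| * |γ i j - γ' i j| := abs_mul _ _
        _ ≤ K * (γ' i j * (1 - m j) + r i * p j / δ) :=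
            mul_le_mul (hK i j) habs (abs_nonneg _) hK0
    have hsum1 : ∑ i, ∑ j, γ' i j * (1 - m j) = δ := by
      rw [Finset.sum_comm]
      have : ∀ j, ∑ i, γ' i j * (1 - m j) = ν' j - m j * ν' j := by
        intro j
        rw [← Finset.sum_mul, hγ'c j]
        ring
      rw [Finset.sum_congr rfl fun j _ => this j, Finset.sum_sub_distrib, hν'1, hsum_mv]
      ring
    have hsum2 : ∑ i, ∑ j, r i * p j / δ = δ := by
      have : ∀ i, ∑ j, r i * p j / δ = r i := by
        intro i
        rw [← Finset.sum_div, ← Finset.mul_sum, ← hδdef, mul_div_assoc, div_self hδz,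
          mul_one]
      rw [Finset.sum_congr rfl fun i _ => this i, hsr]
    have hmain : ∑ i, ∑ j, c i j * γ i j - ∑ i, ∑ j, c i j * γ' i j ≤ K * (2 * δ) := by
      have h1 : ∑ i, ∑ j, c i j * γ i j - ∑ i, ∑ j, c i j * γ' i j
          = ∑ i, ∑ j, (c i j * γ i j - c i j * γ' i j) := by
        rw [← Finset.sum_sub_distrib]
        refine Finset.sum_congr rfl fun i _ => ?_
        rw [← Finset.sum_sub_distrib]
      rw [h1]
      calc ∑ i, ∑ j, (c i j * γ i j - c i j * γ' i j)
          ≤ ∑ i, ∑ j, K * (γ' i j * (1 - m j) + r i * p j / δ) :=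
            Finset.sum_le_sum fun i _ => Finset.sum_le_sum fun j _ => hterm i j
        _ = K * (2 * δ) := by
            simp only [← Finset.mul_sum]
            congr 1
            have : ∑ i, ∑ j, (γ' i j * (1 - m j) + r i * p j / δ)
                = ∑ i, ∑ j, γ' i j * (1 - m j) + ∑ i, ∑ j, r i * p j / δ := by
              rw [← Finset.sum_add_distrib]
              exact Finset.sum_congr rfl fun i _ => Finset.sum_add_distrib
            rw [this, hsum1, hsum2]; ring
    have : K * (2 * δ) ≤ 2 * K * ∑ j, |ν j - ν' j| := by
      have := mul_le_mul_of_nonneg_left hδd hK0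
      nlinarith
    linarith

theorem MK_lipschitz
    {I J : Type*} [Fintype I] [Fintype J] [Nonempty I] [Nonempty J]
    (μ : I → ℝ) (hμ0 : ∀ i, 0 ≤ μ i) (hμ1 : ∑ i, μ i = 1)
    (c : I → J → ℝ)
    (MK : (J → ℝ) → ℝ)
    (hMK : ∀ ν, MK ν = sInf ((fun γ : I → J → ℝ => ∑ i, ∑ j, c i j * γ i j) ''
      {γ | (∀ i j, 0 ≤ γ i j) ∧ (∀ i, ∑ j, γ i j = μ i) ∧ (∀ j, ∑ i, γ i j = ν j)})) :
    ∀ ν ν' : J → ℝ, (∀ j, 0 ≤ ν j) → ∑ j, ν j = 1 →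
      (∀ j, 0 ≤ ν' j) → ∑ j, ν' j = 1 →
      |MK ν - MK ν'| ≤
        2 * (Finset.univ.sup' Finset.univ_nonempty (fun p : I × J => |c p.1 p.2|)) *
          ∑ j, |ν j - ν' j| := by
  intro ν ν' hν0 hν1 hν'0 hν'1
  set C := Finset.univ.sup' Finset.univ_nonempty (fun p : I × J => |c p.1 p.2|) with hC
  have hCle : ∀ i j, |c i j| ≤ C := fun i j =>
    Finset.le_sup' (fun p : I × J => |c p.1 p.2|) (Finset.mem_univ (i, j))
  have hC0 : 0 ≤ C :=
    le_trans (abs_nonneg _) (hCle (Classical.arbitrary I) (Classical.arbitrary J))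
  have hne : ∀ (ρ : J → ℝ), (∀ j, 0 ≤ ρ j) → (∑ j, ρ j = 1) →
      ((fun γ : I → J → ℝ => ∑ i, ∑ j, c i j * γ i j) ''
      {γ | (∀ i j, 0 ≤ γ i j) ∧ (∀ i, ∑ j, γ i j = μ i) ∧
        (∀ j, ∑ i, γ i j = ρ j)}).Nonempty := by
    intro ρ hρ0 hρ1
    exact ⟨_, ⟨fun i j => μ i * ρ j,
      ⟨fun i j => mul_nonneg (hμ0 i) (hρ0 j),
       fun i => by rw [← Finset.mul_sum, hρ1, mul_one],
       fun j => by rw [← Finset.sum_mul, hμ1, one_mul]⟩, rfl⟩⟩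
  have hbdd : ∀ (ρ : J → ℝ),
      BddBelow ((fun γ : I → J → ℝ => ∑ i, ∑ j, c i j * γ i j) ''
      {γ | (∀ i j, 0 ≤ γ i j) ∧ (∀ i, ∑ j, γ i j = μ i) ∧
        (∀ j, ∑ i, γ i j = ρ j)}) := by
    intro ρ
    refine ⟨-C, ?_⟩
    rintro x ⟨γ, ⟨hγ0, hγr, hγc⟩, rfl⟩
    have hsum : ∑ i, ∑ j, γ i j = 1 := by
      rw [Finset.sum_congr rfl fun i _ => hγr i, hμ1]
    calc -C = -C * ∑ i, ∑ j, γ i j := by rw [hsum, mul_one]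
      _ = ∑ i, ∑ j, -C * γ i j := by simp [Finset.mul_sum]
      _ ≤ ∑ i, ∑ j, c i j * γ i j := by
          refine Finset.sum_le_sum fun i _ => Finset.sum_le_sum fun j _ => ?_
          exact mul_le_mul_of_nonneg_right
            (le_trans (neg_le_neg (hCle i j)) (neg_abs_le _)) (hγ0 i j)
  have key : ∀ (ρ ρ' : J → ℝ), (∀ j, 0 ≤ ρ j) → ∑ j, ρ j = 1 →
      (∀ j, 0 ≤ ρ' j) → ∑ j, ρ' j = 1 →
      MK ρ - MK ρ' ≤ 2 * C * ∑ j, |ρ j - ρ' j| := by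
    intro ρ ρ' h0 h1 h0' h1'
    have h2 : MK ρ - 2 * C * ∑ j, |ρ j - ρ' j| ≤
        sInf ((fun γ : I → J → ℝ => ∑ i, ∑ j, c i j * γ i j) ''
        {γ | (∀ i j, 0 ≤ γ i j) ∧ (∀ i, ∑ j, γ i j = μ i) ∧
          (∀ j, ∑ i, γ i j = ρ' j)}) := by
      apply le_csInf (hne ρ' h0' h1')
      rintro x ⟨γ', ⟨hγ'0, hγ'r, hγ'c⟩, rfl⟩
      obtain ⟨γ, hγ0, hγr, hγc, hcost⟩ :=
        MK_aux μ hμ1 c C hCle hC0 ρ ρ' h0 h1 h0' h1' γ' hγ'0 hγ'r hγ'c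
      have hMKρ : MK ρ ≤ ∑ i, ∑ j, c i j * γ i j := by
        rw [hMK ρ]
        exact csInf_le (hbdd ρ) ⟨γ, ⟨hγ0, hγr, hγc⟩, rfl⟩
      simp only
      linarith
    rw [hMK ρ']
    linarith
  rw [abs_sub_le_iff]
  constructor
  · exact key ν ν' hν0 hν1 hν'0 hν'1
  · have hsym : ∑ j, |ν' j - ν j| = ∑ j, |ν j - ν' j| := by
      simp [abs_sub_comm]
    have h := key ν' ν hν'0 hν'1 hν0 hν1
    rw [hsym] at h
    exact h
end

section
/- Finite Kantorovich duality: for finite sets I, J, probability vectors μ on I and ν on J, and cost matrix c, one has MK(ν) = sup over (u,v) ∈ ℝ^I × ℝ^J with u_i + v_j ≤ c_{ij} for all i,j of (Σ_i u_i μ_i + Σ_j v_j ν_j), and moreover the supremum is attained with u_i = min_{j} (c_{ij} − v_j) for some v ∈ ℝ^J. -/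
/-!
Weak duality is the termwise inequality `Σ (u i + v j) γ i j ≤ Σ c i j γ i j`. For the reverse
inequality, the image of the simplex of plans under `γ ↦ (marginals of γ, cost of γ)` is compact
and convex and misses `(μ, ν, r)` whenever `r < MK`; a separating functional, divided by its
(positive) cost coefficient, is a dual pair of value `> r`.

For attainment, pass to the semi-dual `v ↦ dualValue (cTransform c v) v`. Replacing `v` by its
double `c`-transform and subtracting a constant does not decrease it and lands in the box
`[-2 max |c|, 2 max |c|]^J`, so its maximum over that compact box is a global maximum.
-/

open Finset

namespace Kantorovich

section CTransform

variable {I J : Type*} [Fintype J] [Nonempty J] (c : I → J → ℝ)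

noncomputable def cTransform (v : J → ℝ) (i : I) : ℝ :=
  univ.inf' univ_nonempty fun j => c i j - v j

theorem cTransform_add_le (v : J → ℝ) (i : I) (j : J) : cTransform c v i + v j ≤ c i j := by
  have := inf'_le (fun j => c i j - v j) (mem_univ j)
  rw [cTransform]
  linarith

theorem le_cTransform {u : I → ℝ} {v : J → ℝ} (h : ∀ i j, u i + v j ≤ c i j) (i : I) :
    u i ≤ cTransform c v i :=
  le_inf' _ _ fun j _ => le_sub_iff_add_le.mpr (h i j)

theorem cTransform_add_const (v : J → ℝ) (a : ℝ) (i : I) :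
    cTransform c (fun j => v j + a) i = cTransform c v i - a := by
  simp only [cTransform, sub_add_eq_sub_sub]
  exact (map_finset_inf' (OrderIso.addRight (-a)) univ_nonempty _).symm

theorem cTransform_sub_cTransform_le {M : ℝ} (hc : ∀ i j, |c i j| ≤ M) (v : J → ℝ) (i i' : I) :
    cTransform c v i - cTransform c v i' ≤ 2 * M := by
  obtain ⟨j, -, hj⟩ := exists_mem_eq_inf' univ_nonempty fun j => c i' j - v j
  have hi' : cTransform c v i' = c i' j - v j := hj
  have := cTransform_add_le c v i j
  have := abs_le.mp (hc i j)
  have := abs_le.mp (hc i' j)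
  linarith

theorem continuous_cTransform : Continuous (cTransform c) := by
  refine continuous_pi fun i => ?_
  exact Continuous.finset_inf'_apply _ fun j _ => continuous_const.sub (continuous_apply j)

end CTransform

section Duality

variable {I J : Type*} [Fintype I] [Fintype J] (μ : I → ℝ) (ν : J → ℝ) (c : I → J → ℝ)

def couplings : Set (I → J → ℝ) :=
  {γ | (∀ i j, 0 ≤ γ i j) ∧ (∀ i, ∑ j, γ i j = μ i) ∧ (∀ j, ∑ i, γ i j = ν j)}

def transportCost (γ : I → J → ℝ) : ℝ := ∑ i, ∑ j, c i j * γ i j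

def dualValue (u : I → ℝ) (v : J → ℝ) : ℝ := ∑ i, u i * μ i + ∑ j, v j * ν j

variable {μ ν c}

theorem mul_mem_couplings (hμ0 : ∀ i, 0 ≤ μ i) (hμ1 : ∑ i, μ i = 1)
    (hν0 : ∀ j, 0 ≤ ν j) (hν1 : ∑ j, ν j = 1) : (fun i j => μ i * ν j) ∈ couplings μ ν :=
  ⟨fun i j => mul_nonneg (hμ0 i) (hν0 j), fun i => by rw [← mul_sum, hν1, mul_one],
    fun j => by rw [← sum_mul, hμ1, one_mul]⟩

theorem dualValue_le_transportCost {γ : I → J → ℝ} (hγ : γ ∈ couplings μ ν) {u : I → ℝ}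
    {v : J → ℝ} (h : ∀ i j, u i + v j ≤ c i j) : dualValue μ ν u v ≤ transportCost c γ := by
  obtain ⟨hγ0, hγμ, hγν⟩ := hγ
  calc dualValue μ ν u v = ∑ i, ∑ j, (u i + v j) * γ i j := by
        simp only [dualValue, add_mul, sum_add_distrib, ← hγμ, ← hγν, mul_sum]
        rw [sum_comm (f := fun i j => v j * γ i j)]
    _ ≤ transportCost c γ :=
        sum_le_sum fun i _ => sum_le_sum fun j _ => mul_le_mul_of_nonneg_right (h i j) (hγ0 i j)

theorem dualValue_mono_left (hμ0 : ∀ i, 0 ≤ μ i) {u u' : I → ℝ} (hu : u ≤ u') (v : J → ℝ) :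
    dualValue μ ν u v ≤ dualValue μ ν u' v :=
  add_le_add_left (sum_le_sum fun i _ => mul_le_mul_of_nonneg_right (hu i) (hμ0 i)) _

theorem dualValue_mono_right (hν0 : ∀ j, 0 ≤ ν j) (u : I → ℝ) {v v' : J → ℝ} (hv : v ≤ v') :
    dualValue μ ν u v ≤ dualValue μ ν u v' :=
  add_le_add_right (sum_le_sum fun j _ => mul_le_mul_of_nonneg_right (hv j) (hν0 j)) _

theorem dualValue_le_sInf (hne : (couplings μ ν).Nonempty) {u : I → ℝ} {v : J → ℝ}
    (h : ∀ i j, u i + v j ≤ c i j) : dualValue μ ν u v ≤ sInf (transportCost c '' couplings μ ν) :=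
  le_csInf (hne.image _) fun _ ⟨_, hγ, hγc⟩ => hγc ▸ dualValue_le_transportCost hγ h

variable [Nonempty J]

theorem bddBelow_transportCost_image : BddBelow (transportCost c '' couplings μ ν) :=
  ⟨dualValue μ ν (cTransform c 0) 0, by
    rintro _ ⟨γ, hγ, rfl⟩
    exact dualValue_le_transportCost hγ (cTransform_add_le c 0)⟩

variable (μ ν c) in
noncomputable def semiDual (v : J → ℝ) : ℝ := dualValue μ ν (cTransform c v) v

theorem dualValue_le_semiDual (hμ0 : ∀ i, 0 ≤ μ i) {u : I → ℝ} {v : J → ℝ}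
    (h : ∀ i j, u i + v j ≤ c i j) : dualValue μ ν u v ≤ semiDual μ ν c v :=
  dualValue_mono_left hμ0 (le_cTransform c h) v

theorem semiDual_add_const (hμν : ∑ i, μ i = ∑ j, ν j) (v : J → ℝ) (a : ℝ) :
    semiDual μ ν c (fun j => v j + a) = semiDual μ ν c v := by
  simp only [semiDual, dualValue, cTransform_add_const, sub_mul, add_mul, sum_sub_distrib,
    sum_add_distrib, ← mul_sum, hμν]
  ring

theorem semiDual_le_semiDual_cTransform_cTransform [Nonempty I] (hμ0 : ∀ i, 0 ≤ μ i)
    (hν0 : ∀ j, 0 ≤ ν j) (v : J → ℝ) :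
    semiDual μ ν c v ≤ semiDual μ ν c (cTransform (flip c) (cTransform c v)) := by
  set u := cTransform c v
  set v' := cTransform (flip c) u
  have hv' : v ≤ v' := le_cTransform (flip c) fun j i => by
    rw [add_comm]; exact cTransform_add_le c v i j
  calc semiDual μ ν c v = dualValue μ ν u v := rfl
    _ ≤ dualValue μ ν u v' := dualValue_mono_right hν0 u hv'
    _ ≤ semiDual μ ν c v' := dualValue_le_semiDual hμ0 fun i j => by
        rw [add_comm]; exact cTransform_add_le (flip c) u j i

variable (μ ν c) in
theorem continuous_semiDual : Continuous (semiDual μ ν c) := by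
  unfold semiDual dualValue
  have := continuous_cTransform c
  fun_prop

variable [Nonempty I]

theorem exists_mem_Icc_semiDual_le (hμ0 : ∀ i, 0 ≤ μ i) (hν0 : ∀ j, 0 ≤ ν j)
    (hμν : ∑ i, μ i = ∑ j, ν j) {M : ℝ} (hc : ∀ i j, |c i j| ≤ M) (v : J → ℝ) :
    ∃ w : J → ℝ, (∀ j, w j ∈ Set.Icc (-(2 * M)) (2 * M)) ∧ semiDual μ ν c v ≤ semiDual μ ν c w := by
  set v' := cTransform (flip c) (cTransform c v)
  have hosc := cTransform_sub_cTransform_le (flip c) (fun j i => hc i j) (cTransform c v)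
  obtain ⟨j₀⟩ := ‹Nonempty J›
  refine ⟨fun j => v' j + -v' j₀, fun j => ⟨?_, ?_⟩, ?_⟩
  · linarith [hosc j₀ j]
  · linarith [hosc j j₀]
  · rw [semiDual_add_const hμν]
    exact semiDual_le_semiDual_cTransform_cTransform hμ0 hν0 v

theorem exists_forall_semiDual_le (hμ0 : ∀ i, 0 ≤ μ i) (hν0 : ∀ j, 0 ≤ ν j)
    (hμν : ∑ i, μ i = ∑ j, ν j) : ∃ v : J → ℝ, ∀ w, semiDual μ ν c w ≤ semiDual μ ν c v := by
  obtain ⟨M, hM⟩ := Finite.exists_le fun p : I × J => |c p.1 p.2|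
  have hc : ∀ i j, |c i j| ≤ M := fun i j => hM (i, j)
  have hK : IsCompact (Set.univ.pi fun _ : J => Set.Icc (-(2 * M)) (2 * M)) :=
    isCompact_univ_pi fun _ => isCompact_Icc
  obtain ⟨w₀, hw₀, -⟩ := exists_mem_Icc_semiDual_le hμ0 hν0 hμν hc 0
  obtain ⟨v, -, hv⟩ := hK.exists_isMaxOn ⟨w₀, Set.mem_univ_pi.mpr hw₀⟩
    (continuous_semiDual μ ν c).continuousOn
  refine ⟨v, fun w => ?_⟩
  obtain ⟨w', hw'K, hw'⟩ := exists_mem_Icc_semiDual_le hμ0 hν0 hμν hc w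
  exact hw'.trans (hv (Set.mem_univ_pi.mpr hw'K))

end Duality

section Separation

variable {I J : Type*} [Fintype I] [Fintype J] {μ : I → ℝ} {ν : J → ℝ} {c : I → J → ℝ}

theorem linearMap_apply_eq_sum_single {R : Type*} [CommSemiring R] [DecidableEq I] [DecidableEq J]
    (f : (I → R) × (J → R) × R →ₗ[R] R) (a : I → R) (b : J → R) (t : R) :
    f (a, b, t) = ∑ i, a i * f (Pi.single i 1, 0, 0) + ∑ j, b j * f (0, Pi.single j 1, 0)
      + t * f (0, 0, 1) := by
  have : (a, b, t) = ∑ i, a i • (Pi.single i 1, 0, 0) + ∑ j, b j • (0, Pi.single j 1, 0)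
      + t • ((0, 0, 1) : (I → R) × (J → R) × R) := by
    ext <;> simp [Prod.fst_sum, Prod.snd_sum, Pi.single_apply]
  rw [this]
  simp only [map_add, map_sum, map_smul, smul_eq_mul]

variable (c) in
def marginalsCost : (I × J → ℝ) →ₗ[ℝ] (I → ℝ) × (J → ℝ) × ℝ where
  toFun γ := (fun i => ∑ j, γ (i, j), fun j => ∑ i, γ (i, j), transportCost c (Function.curry γ))
  map_add' γ δ := by
    ext <;> simp [transportCost, sum_add_distrib, mul_add]
  map_smul' a γ := by
    ext <;> simp [transportCost, mul_sum, mul_left_comm]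

theorem marginalsCost_single [DecidableEq I] [DecidableEq J] (i : I) (j : J) :
    marginalsCost c (Pi.single (i, j) 1) = (Pi.single i 1, Pi.single j 1, c i j) := by
  ext <;> simp [marginalsCost, transportCost, Pi.single_apply, ite_and, mul_ite]

theorem marginalsCost_uncurry {γ : I → J → ℝ} (hγ : γ ∈ couplings μ ν) :
    marginalsCost c (Function.uncurry γ) = (μ, ν, transportCost c γ) := by
  ext <;> simp [marginalsCost, hγ.2.1, hγ.2.2]

theorem uncurry_mem_stdSimplex {γ : I → J → ℝ} (hγ : γ ∈ couplings μ ν) (hμ1 : ∑ i, μ i = 1) :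
    Function.uncurry γ ∈ stdSimplex ℝ (I × J) :=
  ⟨fun p => hγ.1 p.1 p.2, by simp [Fintype.sum_prod_type, hγ.2.1, hμ1]⟩

theorem exists_dualValue_gt_of_separates (hμ1 : ∑ i, μ i = 1)
    (f : (I → ℝ) × (J → ℝ) × ℝ →ₗ[ℝ] ℝ) {s r : ℝ} {γ : I → J → ℝ} (hγ : γ ∈ couplings μ ν)
    (hr : r < transportCost c γ) (hsep : ∀ δ ∈ stdSimplex ℝ (I × J), s < f (marginalsCost c δ))
    (hfp : f (μ, ν, r) < s) :
    ∃ (u : I → ℝ) (v : J → ℝ), (∀ i j, u i + v j ≤ c i j) ∧ r < dualValue μ ν u v := by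
  classical
  set u' : I → ℝ := fun i => f (Pi.single i 1, 0, 0)
  set v' : J → ℝ := fun j => f (0, Pi.single j 1, 0)
  set l := f (0, 0, 1)
  have hf : ∀ a b t, f (a, b, t) = ∑ i, a i * u' i + ∑ j, b j * v' j + t * l :=
    linearMap_apply_eq_sum_single f
  have hsingle : ∀ i j, s < u' i + v' j + c i j * l := fun i j => by
    have := hsep _ (single_mem_stdSimplex ℝ (i, j))
    rw [marginalsCost_single, hf] at this
    simpa [Pi.single_apply] using this
  have hγs := hsep _ (uncurry_mem_stdSimplex hγ hμ1)
  rw [marginalsCost_uncurry hγ, hf] at hγs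
  rw [hf] at hfp
  -- `γ` costs more than `r` while having the same marginals as the point `(μ, ν, r)`
  have hl : 0 < l := pos_of_mul_pos_right (a := transportCost c γ - r) (by rw [sub_mul]; linarith)
    (by linarith)
  refine ⟨fun i => (s - u' i) / l, fun j => -v' j / l, fun i j => ?_, ?_⟩
  · rw [← add_div, div_le_iff₀ hl]
    linarith [hsingle i j]
  · have : dualValue μ ν (fun i => (s - u' i) / l) (fun j => -v' j / l)
        = (s - (∑ i, μ i * u' i + ∑ j, ν j * v' j)) / l := by
      simp only [dualValue, div_mul_eq_mul_div, ← sum_div, sub_mul, sum_sub_distrib, ← mul_sum,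
        hμ1, neg_mul, sum_neg_distrib, mul_comm (u' _), mul_comm (v' _)]
      ring
    rw [this, lt_div_iff₀ hl]
    linarith

theorem exists_dualValue_gt [Nonempty J] (hμ0 : ∀ i, 0 ≤ μ i) (hμ1 : ∑ i, μ i = 1)
    (hν0 : ∀ j, 0 ≤ ν j) (hν1 : ∑ j, ν j = 1) {r : ℝ}
    (hr : r < sInf (transportCost c '' couplings μ ν)) :
    ∃ (u : I → ℝ) (v : J → ℝ), (∀ i j, u i + v j ≤ c i j) ∧ r < dualValue μ ν u v := by
  have hT : IsCompact (marginalsCost c '' stdSimplex ℝ (I × J)) :=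
    (isCompact_stdSimplex ℝ _).image (marginalsCost c).continuous_of_finiteDimensional
  have hpT : (μ, ν, r) ∉ marginalsCost c '' stdSimplex ℝ (I × J) := by
    rintro ⟨γ, hγ, hγp⟩
    simp only [marginalsCost, LinearMap.coe_mk, AddHom.coe_mk, Prod.mk.injEq] at hγp
    obtain ⟨hγμ, hγν, hγr⟩ := hγp
    have hcurry : Function.curry γ ∈ couplings μ ν :=
      ⟨fun i j => hγ.1 (i, j), congrFun hγμ, congrFun hγν⟩
    exact hr.not_ge (csInf_le bddBelow_transportCost_image ⟨_, hcurry, hγr⟩)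
  obtain ⟨f, s, hfp, hfT⟩ := geometric_hahn_banach_point_closed
    ((convex_stdSimplex ℝ _).linear_image _) hT.isClosed hpT
  have hprod := mul_mem_couplings hμ0 hμ1 hν0 hν1
  exact exists_dualValue_gt_of_separates hμ1 f.toLinearMap hprod
    (hr.trans_le (csInf_le bddBelow_transportCost_image ⟨_, hprod, rfl⟩))
    (fun γ hγ => hfT _ (Set.mem_image_of_mem _ hγ)) hfp

end Separation

end Kantorovich

open Kantorovich

theorem kantorovich_duality_finite
    {I J : Type*} [Fintype I] [Fintype J] [Nonempty I] [Nonempty J]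
    (μ : I → ℝ) (hμ0 : ∀ i, 0 ≤ μ i) (hμ1 : ∑ i, μ i = 1)
    (ν : J → ℝ) (hν0 : ∀ j, 0 ≤ ν j) (hν1 : ∑ j, ν j = 1)
    (c : I → J → ℝ)
    (MK : ℝ)
    (hMK : MK = sInf ((fun γ : I → J → ℝ => ∑ i, ∑ j, c i j * γ i j) ''
      {γ | (∀ i j, 0 ≤ γ i j) ∧ (∀ i, ∑ j, γ i j = μ i) ∧ (∀ j, ∑ i, γ i j = ν j)})) :
    MK = sSup {x : ℝ | ∃ u : I → ℝ, ∃ v : J → ℝ,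
        (∀ i j, u i + v j ≤ c i j) ∧ x = ∑ i, u i * μ i + ∑ j, v j * ν j} ∧
    ∃ v : J → ℝ,
      (∀ i j, (Finset.univ.inf' Finset.univ_nonempty (fun j' => c i j' - v j')) + v j ≤ c i j) ∧
      (∑ i, (Finset.univ.inf' Finset.univ_nonempty (fun j' => c i j' - v j')) * μ i
        + ∑ j, v j * ν j) = MK := by
  change MK = sInf (transportCost c '' couplings μ ν) at hMK
  have weak : ∀ (u : I → ℝ) (v : J → ℝ), (∀ i j, u i + v j ≤ c i j) → dualValue μ ν u v ≤ MK :=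
    fun u v h => hMK ▸ dualValue_le_sInf ⟨_, mul_mem_couplings hμ0 hμ1 hν0 hν1⟩ h
  obtain ⟨v, hv⟩ := exists_forall_semiDual_le (c := c) hμ0 hν0 (hμ1.trans hν1.symm)
  have hvMK : semiDual μ ν c v = MK := by
    refine le_antisymm (weak _ _ (cTransform_add_le c v)) (le_of_forall_lt fun r hr => ?_)
    obtain ⟨u', v', h', hr'⟩ := exists_dualValue_gt hμ0 hμ1 hν0 hν1 (hMK ▸ hr)
    exact hr'.trans_le ((dualValue_le_semiDual hμ0 h').trans (hv v'))
  refine ⟨?_, v, cTransform_add_le c v, hvMK⟩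
  refine Eq.symm <| IsGreatest.csSup_eq ⟨⟨_, v, cTransform_add_le c v, hvMK.symm⟩, ?_⟩
  rintro _ ⟨u', v', h', rfl⟩
  exact weak u' v' h'
end

section
/- Define K(v) = −Σ_i μ_i min_{j∈J} (c_{ij} − v_j) for v ∈ ℝ^J, with μ a probability vector on finite I and c ∈ ℝ^{I×J}. Then K is convex and Lipschitz on ℝ^J, and its Legendre–Fenchel conjugate K* satisfies K*(ν) = MK(ν) if ν is a probability vector on J and K*(ν) = +∞ otherwise. -/
/-!
`K` is minus a `μ`-average of the `c`-transforms `v ↦ min_j (c i j - v j)`, each a minimum of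
affine functions; so `K` is convex, monotone, and satisfies `K (v + t) = K v + t`. These last two
properties alone make `K` 1-Lipschitz for the sup norm and make the conjugate `+∞` at every `ν`
with a negative entry or with total mass `≠ 1`.

For a probability vector `ν`, `⟨v, ν⟩ - K v` is the minimum, over plans `γ` with first marginal
`μ`, of the Lagrangian `cost γ + ⟨v, ν - second marginal of γ⟩`, whose supremum over `v` is
`cost γ` if `γ` couples `μ` and `ν` and `+∞` otherwise. The plans form a compact convex set and the
Lagrangian is affine in each variable, so Sion's minimax theorem exchanges `inf` and `sup`.
-/

open Finset

theorem mul_inf'_le_sum_mul {ι : Type*} {s : Finset ι} (hs : s.Nonempty) (w p : ι → ℝ)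
    (hp : ∀ j ∈ s, 0 ≤ p j) : (∑ j ∈ s, p j) * s.inf' hs w ≤ ∑ j ∈ s, w j * p j := by
  rw [sum_mul]
  exact sum_le_sum fun j hj => by
    rw [mul_comm]
    exact mul_le_mul_of_nonneg_right (inf'_le w hj) (hp j hj)

section MonotoneAddConst

variable {J : Type*} [Fintype J] {K : (J → ℝ) → ℝ}

theorem lipschitzWith_one_of_monotone_of_add_const (hmono : Monotone K)
    (hadd : ∀ v (t : ℝ), K (v + fun _ => t) = K v + t) : LipschitzWith 1 K := by
  refine LipschitzWith.of_le_add fun v w => ?_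
  have hvw : v ≤ w + fun _ => dist v w := fun j => by
    have h := dist_le_pi_dist v w j
    rw [Real.dist_eq] at h
    simp only [Pi.add_apply]
    linarith [le_abs_self (v j - w j)]
  exact (hmono hvw).trans_eq (hadd w _)

theorem not_bddAbove_conjugate_of_sum_ne_one (hadd : ∀ v (t : ℝ), K (v + fun _ => t) = K v + t)
    {ν : J → ℝ} (hν : ∑ j, ν j ≠ 1) :
    ¬ BddAbove {x : ℝ | ∃ v : J → ℝ, x = ∑ j, v j * ν j - K v} := by
  rintro ⟨M, hM⟩
  have hs : ∑ j, ν j - 1 ≠ 0 := sub_ne_zero.mpr hν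
  set t := (M + 1 + K 0) / (∑ j, ν j - 1)
  have ht : t * (∑ j, ν j - 1) = M + 1 + K 0 := div_mul_cancel₀ _ hs
  have hvalue : ∑ j, t * ν j - K (0 + fun _ => t) = M + 1 := by
    rw [hadd, ← mul_sum]
    linear_combination ht
  have := hM ⟨fun _ => t, by simpa using hvalue.symm⟩
  linarith

theorem not_bddAbove_conjugate_of_neg_apply (hmono : Monotone K) {ν : J → ℝ} {j₀ : J}
    (hj₀ : ν j₀ < 0) :
    ¬ BddAbove {x : ℝ | ∃ v : J → ℝ, x = ∑ j, v j * ν j - K v} := by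
  classical
  rintro ⟨M, hM⟩
  set t := (|M + K 0| + 1) / -ν j₀
  have ht : 0 ≤ t := div_nonneg (by positivity) (by linarith)
  have htν : t * -ν j₀ = |M + K 0| + 1 := div_mul_cancel₀ _ (by linarith)
  have hK : K (Pi.single j₀ (-t)) ≤ K 0 := hmono (Pi.single_nonpos.mpr (neg_nonpos.mpr ht))
  have hpair : ∑ j, (Pi.single j₀ (-t) : J → ℝ) j * ν j = |M + K 0| + 1 := by
    simp only [Pi.single_apply, ite_mul, zero_mul, sum_ite_eq', mem_univ, if_true]
    linear_combination htν
  have := hM ⟨(Pi.single j₀ (-t) : J → ℝ), rfl⟩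
  linarith [le_abs_self (M + K 0)]

end MonotoneAddConst

section CTransform

variable {I J : Type*} [Fintype J] [Nonempty J] (c : I → J → ℝ)

def cTransform (v : J → ℝ) (i : I) : ℝ :=
  univ.inf' univ_nonempty fun j => c i j - v j

theorem cTransform_antitone (i : I) : Antitone fun v => cTransform c v i :=
  fun _ _ hvw => inf'_mono_fun fun j _ => sub_le_sub_left (hvw j) _

theorem cTransform_add_const (v : J → ℝ) (t : ℝ) (i : I) :
    cTransform c (v + fun _ => t) i = cTransform c v i - t := by
  simp only [cTransform, Pi.add_apply, ← sub_sub]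
  exact (map_finset_inf' (OrderIso.subRight t) univ_nonempty _).symm

theorem concaveOn_cTransform (i : I) : ConcaveOn ℝ Set.univ fun v => cTransform c v i := by
  have h : ConcaveOn ℝ Set.univ (univ.inf' univ_nonempty fun j (v : J → ℝ) => c i j - v j) :=
    inf'_induction _ _ (fun _ hf _ hg => hf.inf hg) fun j _ =>
      (concaveOn_const (c i j) convex_univ).sub ((LinearMap.proj j).convexOn convex_univ)
  convert h using 1
  ext v
  simp only [cTransform, Finset.inf'_apply]

variable [Fintype I] {μ : I → ℝ}

def kantorovichFunctional (μ : I → ℝ) (c : I → J → ℝ) (v : J → ℝ) : ℝ :=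
  -∑ i, μ i * cTransform c v i

theorem monotone_kantorovichFunctional (hμ0 : ∀ i, 0 ≤ μ i) :
    Monotone (kantorovichFunctional μ c) := fun _ _ hvw =>
  neg_le_neg <| sum_le_sum fun i _ =>
    mul_le_mul_of_nonneg_left (cTransform_antitone c i hvw) (hμ0 i)

theorem kantorovichFunctional_add_const (hμ1 : ∑ i, μ i = 1) (v : J → ℝ) (t : ℝ) :
    kantorovichFunctional μ c (v + fun _ => t) = kantorovichFunctional μ c v + t := by
  simp only [kantorovichFunctional, cTransform_add_const, mul_sub, sum_sub_distrib, ← sum_mul,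
    hμ1, one_mul]
  ring

theorem convexOn_kantorovichFunctional (hμ0 : ∀ i, 0 ≤ μ i) :
    ConvexOn ℝ Set.univ (kantorovichFunctional μ c) := by
  have h : ConcaveOn ℝ Set.univ (∑ i, fun v => μ i * cTransform c v i) :=
    sum_induction _ (ConcaveOn ℝ Set.univ) (fun _ _ => ConcaveOn.add)
      (concaveOn_const 0 convex_univ) fun i _ => (concaveOn_cTransform c i).smul (hμ0 i)
  have heq : kantorovichFunctional μ c = -∑ i, fun v => μ i * cTransform c v i := by
    ext v
    simp only [kantorovichFunctional, Pi.neg_apply, Finset.sum_apply]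
  rw [heq]
  exact h.neg

end CTransform

section Duality

variable {I J : Type*} [Fintype J] {μ : I → ℝ}

def plansFrom (μ : I → ℝ) : Set (I → J → ℝ) :=
  {γ | (∀ i j, 0 ≤ γ i j) ∧ ∀ i, ∑ j, γ i j = μ i}

theorem isCompact_plansFrom : IsCompact (plansFrom (J := J) μ) := by
  refine isCompact_Icc.of_isClosed_subset ?_
    (fun γ hγ => ?_ : plansFrom μ ⊆ Set.Icc 0 fun i _ => μ i)
  · simp only [plansFrom, Set.ofPred_and, Set.ofPred_forall]
    exact (isClosed_iInter fun i => isClosed_iInter fun j =>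
      isClosed_le continuous_const (by fun_prop)).inter
      (isClosed_iInter fun i => isClosed_eq (by fun_prop) continuous_const)
  · refine ⟨fun i j => hγ.1 i j, fun i j => ?_⟩
    simp only [← hγ.2 i]
    exact single_le_sum (fun j _ => hγ.1 i j) (mem_univ j)

theorem convex_plansFrom : Convex ℝ (plansFrom (J := J) μ) := by
  rintro γ ⟨hγ0, hγ⟩ δ ⟨hδ0, hδ⟩ a b ha hb hab
  refine ⟨fun i j => ?_, fun i => ?_⟩
  · simp only [Pi.add_apply, Pi.smul_apply, smul_eq_mul]
    exact add_nonneg (mul_nonneg ha (hγ0 i j)) (mul_nonneg hb (hδ0 i j))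
  · simp only [Pi.add_apply, Pi.smul_apply, smul_eq_mul, sum_add_distrib, ← mul_sum, hγ, hδ]
    linear_combination μ i * hab

variable [Fintype I] {ν : J → ℝ}

def transportCost (c γ : I → J → ℝ) : ℝ := ∑ i, ∑ j, c i j * γ i j

def couplings (μ : I → ℝ) (ν : J → ℝ) : Set (I → J → ℝ) :=
  {γ | (∀ i j, 0 ≤ γ i j) ∧ (∀ i, ∑ j, γ i j = μ i) ∧ (∀ j, ∑ i, γ i j = ν j)}

def lagrangian (c : I → J → ℝ) (ν : J → ℝ) (γ : I → J → ℝ) (v : J → ℝ) : ℝ :=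
  transportCost c γ + ∑ j, v j * (ν j - ∑ i, γ i j)

theorem lagrangian_eq (c γ : I → J → ℝ) (v : J → ℝ) :
    lagrangian c ν γ v = ∑ j, v j * ν j + ∑ i, ∑ j, (c i j - v j) * γ i j := by
  simp only [lagrangian, transportCost, mul_sub, sub_mul, sum_sub_distrib, mul_sum]
  rw [sum_comm (f := fun j i => v j * γ i j)]
  simp only [mul_comm]
  ring

theorem convexOn_lagrangian_left (c : I → J → ℝ) (v : J → ℝ) :
    ConvexOn ℝ Set.univ fun γ => lagrangian c ν γ v := by
  let ℓ : (I → J → ℝ) →ₗ[ℝ] ℝ :=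
    ∑ i, ∑ j, (c i j - v j) • (LinearMap.proj j ∘ₗ (LinearMap.proj i : (I → J → ℝ) →ₗ[ℝ] J → ℝ))
  have h : (fun γ => lagrangian c ν γ v) = fun γ => ℓ γ + ∑ j, v j * ν j := by
    ext γ
    simp [ℓ, lagrangian_eq, add_comm]
  rw [h]
  exact (ℓ.convexOn convex_univ).add_const _

theorem concaveOn_lagrangian_right (c γ : I → J → ℝ) :
    ConcaveOn ℝ Set.univ (lagrangian c ν γ) := by
  let ℓ : (J → ℝ) →ₗ[ℝ] ℝ := ∑ j, (ν j - ∑ i, γ i j) • LinearMap.proj j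
  have h : lagrangian c ν γ = fun v => ℓ v + transportCost c γ := by
    ext v
    simp [ℓ, lagrangian, add_comm, mul_comm]
  rw [h]
  exact (ℓ.concaveOn convex_univ).add_const _

theorem lagrangian_of_mem_couplings (c : I → J → ℝ) {γ : I → J → ℝ} (hγ : γ ∈ couplings μ ν)
    (v : J → ℝ) : lagrangian c ν γ v = transportCost c γ := by
  simp [lagrangian, hγ.2.2]

theorem exists_le_lagrangian (c : I → J → ℝ) {γ : I → J → ℝ} {j₀ : J} (hj₀ : ∑ i, γ i j₀ ≠ ν j₀)
    (r : ℝ) : ∃ v, r ≤ lagrangian c ν γ v := by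
  classical
  have hd : ν j₀ - ∑ i, γ i j₀ ≠ 0 := sub_ne_zero.mpr hj₀.symm
  refine ⟨Pi.single j₀ ((r - transportCost c γ) / (ν j₀ - ∑ i, γ i j₀)), le_of_eq ?_⟩
  simp only [lagrangian, Pi.single_apply, ite_mul, zero_mul, sum_ite_eq', mem_univ, if_true]
  field_simp
  ring

variable [Nonempty J]

def dualObjective (μ : I → ℝ) (c : I → J → ℝ) (ν v : J → ℝ) : ℝ :=
  ∑ j, v j * ν j - kantorovichFunctional μ c v

theorem dualObjective_le_lagrangian (c : I → J → ℝ) {γ : I → J → ℝ}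
    (hγ : γ ∈ plansFrom μ) (v : J → ℝ) :
    dualObjective μ c ν v ≤ lagrangian c ν γ v := by
  rw [dualObjective, lagrangian_eq, kantorovichFunctional, sub_neg_eq_add]
  gcongr with i
  rw [← hγ.2 i]
  exact mul_inf'_le_sum_mul _ _ _ fun j _ => hγ.1 i j

theorem exists_lagrangian_eq_dualObjective (c : I → J → ℝ) (hμ0 : ∀ i, 0 ≤ μ i) (v : J → ℝ) :
    ∃ γ ∈ plansFrom μ, lagrangian c ν γ v = dualObjective μ c ν v := by
  classical
  choose j₀ _ hj₀ using fun i => exists_mem_eq_inf' univ_nonempty fun j => c i j - v j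
  refine ⟨fun i => Pi.single (j₀ i) (μ i), ⟨fun i j => ?_, fun i => ?_⟩, ?_⟩
  · exact (Pi.single_nonneg.mpr (hμ0 i) : (0 : J → ℝ) ≤ Pi.single (j₀ i) (μ i)) j
  · simp
  · simp [lagrangian_eq, dualObjective, kantorovichFunctional, cTransform, hj₀, Pi.single_apply,
      mul_comm]

theorem biInf_lagrangian_eq_dualObjective (c : I → J → ℝ) (hμ0 : ∀ i, 0 ≤ μ i) (v : J → ℝ) :
    ⨅ γ ∈ plansFrom μ, (lagrangian c ν γ v : EReal) = dualObjective μ c ν v := by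
  obtain ⟨γ₀, hγ₀, hmin⟩ := exists_lagrangian_eq_dualObjective c hμ0 v
  exact le_antisymm (iInf₂_le_of_le γ₀ hγ₀ (EReal.coe_le_coe hmin.le))
    (le_iInf₂ fun γ hγ => EReal.coe_le_coe (dualObjective_le_lagrangian c hγ v))

theorem iInf_iSup_lagrangian_eq_iSup_iInf (c : I → J → ℝ) (hμ0 : ∀ i, 0 ≤ μ i) :
    ⨅ γ ∈ plansFrom μ, ⨆ v, (lagrangian c ν γ v : EReal) =
      ⨆ v, ⨅ γ ∈ plansFrom μ, (lagrangian c ν γ v : EReal) := by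
  obtain ⟨γ₀, hγ₀, -⟩ := exists_lagrangian_eq_dualObjective (ν := ν) c hμ0 0
  have hcoe : Monotone Real.toEReal := fun _ _ => EReal.coe_le_coe
  have hcont : Continuous fun p : (I → J → ℝ) × (J → ℝ) => Real.toEReal (lagrangian c ν p.1 p.2) :=
    continuous_coe_real_ereal.comp (by unfold lagrangian transportCost; fun_prop)
  have hconvex (v : J → ℝ) : ConvexOn ℝ (plansFrom μ) fun γ => lagrangian c ν γ v :=
    (convexOn_lagrangian_left c v).subset (Set.subset_univ _) convex_plansFrom
  simpa using Sion.minimax' (f := fun γ v => Real.toEReal (lagrangian c ν γ v)) (Y := Set.univ)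
    ⟨γ₀, hγ₀⟩ convex_plansFrom isCompact_plansFrom
    (fun v _ => (hcont.comp (.prodMk_left v)).lowerSemicontinuous.lowerSemicontinuousOn _)
    (fun v _ => (hconvex v).quasiconvexOn.monotone_comp (g := Real.toEReal) hcoe)
    convex_univ
    (fun γ _ => (hcont.comp (.prodMk_right γ)).upperSemicontinuous.upperSemicontinuousOn _)
    (fun γ _ => (concaveOn_lagrangian_right c γ).quasiconcaveOn.monotone_comp
      (g := Real.toEReal) hcoe)

theorem kantorovich_duality (c : I → J → ℝ) (hμ0 : ∀ i, 0 ≤ μ i) (hμ1 : ∑ i, μ i = 1)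
    (hν0 : ∀ j, 0 ≤ ν j) (hν1 : ∑ j, ν j = 1) :
    sSup {x : ℝ | ∃ v : J → ℝ, x = dualObjective μ c ν v} =
      sInf (transportCost c '' couplings μ ν) := by
  set S := {x : ℝ | ∃ v : J → ℝ, x = dualObjective μ c ν v}
  set T := transportCost c '' couplings μ ν
  have hprod : (fun i j => μ i * ν j) ∈ couplings μ ν :=
    ⟨fun i j => mul_nonneg (hμ0 i) (hν0 j), fun i => by rw [← mul_sum, hν1, mul_one],
      fun j => by rw [← sum_mul, hμ1, one_mul]⟩
  have hweak : ∀ v, ∀ γ ∈ couplings μ ν, dualObjective μ c ν v ≤ transportCost c γ :=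
    fun v γ hγ => (dualObjective_le_lagrangian c ⟨hγ.1, hγ.2.1⟩ v).trans_eq
      (lagrangian_of_mem_couplings c hγ v)
  have hS : BddAbove S := ⟨_, by rintro _ ⟨v, rfl⟩; exact hweak v _ hprod⟩
  have hT : BddBelow T := ⟨_, by rintro _ ⟨γ, hγ, rfl⟩; exact hweak 0 γ hγ⟩
  refine le_antisymm (csSup_le ⟨_, 0, rfl⟩ ?_) ?_
  · rintro _ ⟨v, rfl⟩
    exact le_csInf ⟨_, _, hprod, rfl⟩ (by rintro _ ⟨γ, hγ, rfl⟩; exact hweak v γ hγ)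
  have hplans : ∀ γ ∈ plansFrom μ, ∃ v, sInf T ≤ lagrangian c ν γ v := by
    intro γ hγ
    by_cases hcol : ∀ j, ∑ i, γ i j = ν j
    · have hγ' : γ ∈ couplings μ ν := ⟨hγ.1, hγ.2, hcol⟩
      exact ⟨0, (csInf_le hT ⟨γ, hγ', rfl⟩).trans_eq (lagrangian_of_mem_couplings c hγ' 0).symm⟩
    · push Not at hcol
      obtain ⟨j, hj⟩ := hcol
      exact exists_le_lagrangian c hj _
  suffices ((sInf T : ℝ) : EReal) ≤ sSup S from EReal.coe_le_coe_iff.mp this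
  calc ((sInf T : ℝ) : EReal) ≤ ⨅ γ ∈ plansFrom μ, ⨆ v, (lagrangian c ν γ v : EReal) :=
        le_iInf₂ fun γ hγ =>
          let ⟨v, hv⟩ := hplans γ hγ
          le_iSup_of_le v (EReal.coe_le_coe hv)
    _ = ⨆ v, ⨅ γ ∈ plansFrom μ, (lagrangian c ν γ v : EReal) :=
        iInf_iSup_lagrangian_eq_iSup_iInf c hμ0
    _ = ⨆ v, (dualObjective μ c ν v : EReal) := by
        simp only [biInf_lagrangian_eq_dualObjective c hμ0]
    _ ≤ sSup S := iSup_le fun v => EReal.coe_le_coe (le_csSup hS ⟨v, rfl⟩)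

end Duality

theorem K_convex_lipschitz_conjugate_general
    {I J : Type*} [Fintype I] [Fintype J] [Nonempty J]
    (μ : I → ℝ) (hμ0 : ∀ i, 0 ≤ μ i) (hμ1 : ∑ i, μ i = 1)
    (c : I → J → ℝ)
    (K : (J → ℝ) → ℝ)
    (hK : ∀ v, K v = -∑ i, μ i *
      Finset.univ.inf' Finset.univ_nonempty (fun j => c i j - v j))
    (MK : (J → ℝ) → ℝ)
    (hMK : ∀ ν, MK ν = sInf ((fun γ : I → J → ℝ => ∑ i, ∑ j, c i j * γ i j) ''
      {γ | (∀ i j, 0 ≤ γ i j) ∧ (∀ i, ∑ j, γ i j = μ i) ∧ (∀ j, ∑ i, γ i j = ν j)})) :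
    ConvexOn ℝ Set.univ K ∧
    (∃ L : NNReal, LipschitzWith L K) ∧
    (∀ ν : J → ℝ, (∀ j, 0 ≤ ν j) → ∑ j, ν j = 1 →
      sSup {x : ℝ | ∃ v : J → ℝ, x = (∑ j, v j * ν j) - K v} = MK ν) ∧
    (∀ ν : J → ℝ, ¬ ((∀ j, 0 ≤ ν j) ∧ ∑ j, ν j = 1) →
      ¬ BddAbove {x : ℝ | ∃ v : J → ℝ, x = (∑ j, v j * ν j) - K v}) := by
  obtain rfl : K = kantorovichFunctional μ c := funext fun v => by rw [hK]; rfl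
  have hmono := monotone_kantorovichFunctional c hμ0
  have hadd := kantorovichFunctional_add_const c hμ1
  refine ⟨convexOn_kantorovichFunctional c hμ0,
    ⟨1, lipschitzWith_one_of_monotone_of_add_const hmono hadd⟩,
    fun ν hν0 hν1 => ?_, fun ν hν => ?_⟩
  · rw [hMK]
    exact kantorovich_duality c hμ0 hμ1 hν0 hν1
  by_cases hsum : ∑ j, ν j = 1
  · obtain ⟨j, hj⟩ : ∃ j, ν j < 0 := by simpa [hsum] using hν
    exact not_bddAbove_conjugate_of_neg_apply hmono hj
  · exact not_bddAbove_conjugate_of_sum_ne_one hadd hsum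

theorem K_convex_lipschitz_conjugate
    {I J : Type*} [Fintype I] [Fintype J] [Nonempty I] [Nonempty J]
    (μ : I → ℝ) (hμ0 : ∀ i, 0 ≤ μ i) (hμ1 : ∑ i, μ i = 1)
    (c : I → J → ℝ)
    (K : (J → ℝ) → ℝ)
    (hK : ∀ v, K v = -∑ i, μ i *
      Finset.univ.inf' Finset.univ_nonempty (fun j => c i j - v j))
    (MK : (J → ℝ) → ℝ)
    (hMK : ∀ ν, MK ν = sInf ((fun γ : I → J → ℝ => ∑ i, ∑ j, c i j * γ i j) ''
      {γ | (∀ i j, 0 ≤ γ i j) ∧ (∀ i, ∑ j, γ i j = μ i) ∧ (∀ j, ∑ i, γ i j = ν j)})) :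
    ConvexOn ℝ Set.univ K ∧
    (∃ L : NNReal, LipschitzWith L K) ∧
    (∀ ν : J → ℝ, (∀ j, 0 ≤ ν j) → ∑ j, ν j = 1 →
      sSup {x : ℝ | ∃ v : J → ℝ, x = (∑ j, v j * ν j) - K v} = MK ν) ∧
    (∀ ν : J → ℝ, ¬ ((∀ j, 0 ≤ ν j) ∧ ∑ j, ν j = 1) →
      ¬ BddAbove {x : ℝ | ∃ v : J → ℝ, x = (∑ j, v j * ν j) - K v}) :=
  K_convex_lipschitz_conjugate_general μ hμ0 hμ1 c K hK MK hMK
end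

section
/- Fix ε > 0, finite I, J, μ a strictly positive probability vector on I, and c ∈ ℝ^{I×J}. For each probability vector ν on J with ν_j > 0 for all j, the regularized transport problem MK_ε(ν) = inf over γ ∈ Π(μ,ν) of Σ_{ij} c_{ij} γ_{ij} + ε Σ_{ij} γ_{ij}(ln γ_{ij} − 1) has a unique minimizer, and the map ν ↦ MK_ε(ν) is strictly convex on the interior of the simplex. -/
/-!
The cost `γ ↦ ∑ c γ + ε ∑ γ (log γ - 1)` is a sum of strictly convex functions of the single
entries, hence strictly convex on the nonnegative orthant; on the compact convex polytope
`Π(μ, ν)` it therefore has exactly one minimizer.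

`Π(μ, ν)` is the fibre over `ν` of the linear column-sum map restricted to the convex set of
nonnegative matrices with row sums `μ`, so `MK_ε` is a partial minimization of a strictly convex
function over the fibres of a linear map. For `ν₁ ≠ ν₂` the minimizers `γ₁, γ₂` lie in different
fibres, so `a γ₁ + b γ₂` is a competitor for `a ν₁ + b ν₂` whose cost is strictly below
`a MK_ε(ν₁) + b MK_ε(ν₂)`.
-/

open Finset Real

theorem StrictConvexOn.smul {𝕜 E β : Type*} [CommSemiring 𝕜] [PartialOrder 𝕜]
    [AddCommMonoid E] [SMul 𝕜 E] [AddCommMonoid β] [PartialOrder β] [Module 𝕜 β]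
    [PosSMulStrictMono 𝕜 β] {s : Set E} {f : E → β} {c : 𝕜} (hc : 0 < c)
    (hf : StrictConvexOn 𝕜 s f) : StrictConvexOn 𝕜 s fun x => c • f x :=
  ⟨hf.1, fun x hx y hy hxy a b ha hb hab =>
    calc
      c • f (a • x + b • y) < c • (a • f x + b • f y) :=
        smul_lt_smul_of_pos_left (hf.2 hx hy hxy ha hb hab) hc
      _ = a • c • f x + b • c • f y := by rw [smul_add, smul_comm c, smul_comm c]⟩

theorem strictConvexOn_pi_sum {𝕜 ι β : Type*} {E : ι → Type*} [Fintype ι]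
    [Semiring 𝕜] [PartialOrder 𝕜] [∀ i, AddCommMonoid (E i)] [∀ i, Module 𝕜 (E i)]
    [AddCommMonoid β] [PartialOrder β] [IsOrderedCancelAddMonoid β] [Module 𝕜 β]
    {s : ∀ i, Set (E i)} {f : ∀ i, E i → β} (hf : ∀ i, StrictConvexOn 𝕜 (s i) (f i)) :
    StrictConvexOn 𝕜 (Set.univ.pi s) fun x => ∑ i, f i (x i) := by
  refine ⟨convex_pi fun i _ => (hf i).1, fun x hx y hy hxy a b ha hb hab => ?_⟩
  obtain ⟨i₀, hi₀⟩ := Function.ne_iff.1 hxy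
  have hx : ∀ i, x i ∈ s i := fun i => hx i (Set.mem_univ i)
  have hy : ∀ i, y i ∈ s i := fun i => hy i (Set.mem_univ i)
  calc ∑ i, f i (a • x i + b • y i)
      < ∑ i, (a • f i (x i) + b • f i (y i)) :=
        sum_lt_sum (fun i _ => (hf i).convexOn.2 (hx i) (hy i) ha.le hb.le hab)
          ⟨i₀, mem_univ _, (hf i₀).2 (hx i₀) (hy i₀) hi₀ ha hb hab⟩
    _ = a • ∑ i, f i (x i) + b • ∑ i, f i (y i) := by
        rw [sum_add_distrib, smul_sum, smul_sum]

theorem IsMinOn.csInf_image_eq {α β : Type*} [ConditionallyCompleteLattice β] {f : α → β}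
    {s : Set α} {x : α} (hx : x ∈ s) (h : IsMinOn f s x) : sInf (f '' s) = f x :=
  IsLeast.csInf_eq ⟨Set.mem_image_of_mem f hx, Set.forall_mem_image.2 fun _ hy => h hy⟩

theorem StrictConvexOn.csInf_image_inter_preimage {E F : Type*}
    [AddCommGroup E] [Module ℝ E] [AddCommGroup F] [Module ℝ F] {C : Set E} {D : Set F}
    {φ : E → ℝ} (L : E →ₗ[ℝ] F) (hφ : StrictConvexOn ℝ C φ) (hD : Convex ℝ D)
    (hmin : ∀ ν ∈ D, ∃ x ∈ C ∩ L ⁻¹' {ν}, IsMinOn φ (C ∩ L ⁻¹' {ν}) x) :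
    StrictConvexOn ℝ D fun ν => sInf (φ '' (C ∩ L ⁻¹' {ν})) := by
  refine ⟨hD, fun ν₁ hν₁ ν₂ hν₂ hν a b ha hb hab => ?_⟩
  obtain ⟨x₁, hx₁, hmin₁⟩ := hmin ν₁ hν₁
  obtain ⟨x₂, hx₂, hmin₂⟩ := hmin ν₂ hν₂
  obtain ⟨x, hx, hmin⟩ := hmin _ (hD hν₁ hν₂ ha.le hb.le hab)
  have hL₁ : L x₁ = ν₁ := hx₁.2
  have hL₂ : L x₂ = ν₂ := hx₂.2
  have hx₁₂ : x₁ ≠ x₂ := fun h => hν (by rw [← hL₁, ← hL₂, h])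
  have hmix : a • x₁ + b • x₂ ∈ C ∩ L ⁻¹' {a • ν₁ + b • ν₂} :=
    ⟨hφ.1 hx₁.1 hx₂.1 ha.le hb.le hab, by simp [hL₁, hL₂]⟩
  simp only [hmin₁.csInf_image_eq hx₁, hmin₂.csInf_image_eq hx₂, hmin.csInf_image_eq hx]
  calc φ x ≤ φ (a • x₁ + b • x₂) := hmin hmix
    _ < a • φ x₁ + b • φ x₂ := hφ.2 hx₁.1 hx₂.1 hx₁₂ ha hb hab

theorem strictConvexOn_mul_log_sub_one :
    StrictConvexOn ℝ (Set.Ici 0) fun x : ℝ => x * (log x - 1) :=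
  (strictConvexOn_mul_log.sub_concaveOn (concaveOn_id (convex_Ici 0))).congr
    fun x _ => by simp only [Pi.sub_apply, id]; ring

theorem continuous_mul_log_sub_one : Continuous fun x : ℝ => x * (log x - 1) :=
  (continuous_mul_log.sub continuous_id).congr fun x => by simp only [Pi.sub_apply, id]; ring

section EntropicTransport

variable {I J : Type*}

def colSum [Fintype I] : (I → J → ℝ) →ₗ[ℝ] (J → ℝ) := ∑ i, LinearMap.proj i

@[simp]
theorem colSum_apply [Fintype I] (γ : I → J → ℝ) (j : J) : colSum γ j = ∑ i, γ i j := by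
  simp [colSum, Finset.sum_apply]

def transportPlansFrom [Fintype J] (μ : I → ℝ) : Set (I → J → ℝ) :=
  {γ | (∀ i j, 0 ≤ γ i j) ∧ ∀ i, ∑ j, γ i j = μ i}

def transportPlans [Fintype I] [Fintype J] (μ : I → ℝ) (ν : J → ℝ) : Set (I → J → ℝ) :=
  transportPlansFrom μ ∩ colSum ⁻¹' {ν}

theorem mem_transportPlans [Fintype I] [Fintype J] {μ : I → ℝ} {ν : J → ℝ} {γ : I → J → ℝ} :
    γ ∈ transportPlans μ ν ↔
      (∀ i j, 0 ≤ γ i j) ∧ (∀ i, ∑ j, γ i j = μ i) ∧ (∀ j, ∑ i, γ i j = ν j) := by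
  simp [transportPlans, transportPlansFrom, funext_iff, and_assoc]

theorem convex_transportPlansFrom [Fintype J] (μ : I → ℝ) :
    Convex ℝ (transportPlansFrom (J := J) μ) := by
  intro x ⟨hx₀, hxμ⟩ y ⟨hy₀, hyμ⟩ a b ha hb hab
  refine ⟨fun i j => ?_, fun i => ?_⟩
  · simp only [Pi.add_apply, Pi.smul_apply, smul_eq_mul]
    have := hx₀ i j; have := hy₀ i j
    positivity
  · simp only [Pi.add_apply, Pi.smul_apply, smul_eq_mul, sum_add_distrib, ← mul_sum, hxμ, hyμ,
      ← add_mul, hab, one_mul]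

theorem convex_transportPlans [Fintype I] [Fintype J] (μ : I → ℝ) (ν : J → ℝ) :
    Convex ℝ (transportPlans μ ν) :=
  (convex_transportPlansFrom μ).inter ((convex_singleton ν).linear_preimage colSum)

theorem isCompact_transportPlansFrom [Fintype J] (μ : I → ℝ) :
    IsCompact (transportPlansFrom (J := J) μ) := by
  have hclosed : IsClosed (transportPlansFrom (J := J) μ) := by
    simp only [transportPlansFrom, Set.ofPred_and, Set.ofPred_forall]
    exact (isClosed_iInter fun i => isClosed_iInter fun j =>
      isClosed_le continuous_const (by fun_prop)).inter
        (isClosed_iInter fun i => isClosed_eq (by fun_prop) continuous_const)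
  have hbox : IsCompact (Set.univ.pi fun i => Set.univ.pi fun (_ : J) => Set.Icc 0 (μ i)) :=
    isCompact_univ_pi fun _ => isCompact_univ_pi fun _ => isCompact_Icc
  refine hbox.of_isClosed_subset hclosed fun γ ⟨hγ₀, hγμ⟩ i _ j _ => ⟨hγ₀ i j, ?_⟩
  rw [← hγμ i]
  exact single_le_sum (fun j _ => hγ₀ i j) (mem_univ j)

theorem isCompact_transportPlans [Fintype I] [Fintype J] (μ : I → ℝ) (ν : J → ℝ) :
    IsCompact (transportPlans μ ν) :=
  (isCompact_transportPlansFrom μ).inter_right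
    ((isClosed_singleton).preimage (LinearMap.continuous_of_finiteDimensional colSum))

theorem product_mem_transportPlans [Fintype I] [Fintype J] {μ : I → ℝ} {ν : J → ℝ}
    (hμ₀ : ∀ i, 0 ≤ μ i) (hμ₁ : ∑ i, μ i = 1) (hν₀ : ∀ j, 0 ≤ ν j) (hν₁ : ∑ j, ν j = 1) :
    (fun i j => μ i * ν j) ∈ transportPlans μ ν :=
  mem_transportPlans.2 ⟨fun i j => mul_nonneg (hμ₀ i) (hν₀ j),
    fun i => by rw [← mul_sum, hν₁, mul_one], fun j => by rw [← sum_mul, hμ₁, one_mul]⟩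

theorem convex_setOf_pos_sum_eq_one [Fintype J] :
    Convex ℝ {ν : J → ℝ | (∀ j, 0 < ν j) ∧ ∑ j, ν j = 1} := by
  intro ν₁ ⟨hν₁, hν₁'⟩ ν₂ ⟨hν₂, hν₂'⟩ a b ha hb hab
  refine ⟨fun j => convex_Ioi (0 : ℝ) (hν₁ j) (hν₂ j) ha hb hab, ?_⟩
  simp only [Pi.add_apply, Pi.smul_apply, smul_eq_mul, sum_add_distrib, ← mul_sum, hν₁', hν₂',
    mul_one, hab]

noncomputable def entropicCost [Fintype I] [Fintype J] (c : I → J → ℝ) (ε : ℝ)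
    (γ : I → J → ℝ) : ℝ :=
  ∑ i, ∑ j, c i j * γ i j + ε * ∑ i, ∑ j, γ i j * (log (γ i j) - 1)

theorem entropicCost_eq_sum [Fintype I] [Fintype J] (c : I → J → ℝ) (ε : ℝ)
    (γ : I → J → ℝ) :
    entropicCost c ε γ = ∑ i, ∑ j, (c i j * γ i j + ε * (γ i j * (log (γ i j) - 1))) := by
  simp only [entropicCost, mul_sum, sum_add_distrib]

theorem strictConvexOn_entropicCost [Fintype I] [Fintype J] (c : I → J → ℝ) {ε : ℝ}
    (hε : 0 < ε) :
    StrictConvexOn ℝ (Set.univ.pi fun _ => Set.univ.pi fun _ => Set.Ici 0)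
      (entropicCost c ε) := by
  have hterm : ∀ i j, StrictConvexOn ℝ (Set.Ici 0)
      fun x : ℝ => c i j * x + ε * (x * (log x - 1)) := fun i j =>
    ((LinearMap.mulLeft ℝ (c i j)).convexOn (convex_Ici 0)).add_strictConvexOn
      (strictConvexOn_mul_log_sub_one.smul hε)
  exact (strictConvexOn_pi_sum fun i => strictConvexOn_pi_sum (hterm i)).congr
    fun γ _ => (entropicCost_eq_sum c ε γ).symm

theorem continuous_entropicCost [Fintype I] [Fintype J] (c : I → J → ℝ) (ε : ℝ) :
    Continuous (entropicCost c ε) := by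
  have hcoord : ∀ i j, Continuous fun γ : I → J → ℝ => γ i j := fun i j => by fun_prop
  exact (continuous_finsetSum _ fun i _ => continuous_finsetSum _ fun j _ =>
    continuous_const.mul (hcoord i j)).add (continuous_const.mul
      (continuous_finsetSum _ fun i _ => continuous_finsetSum _ fun j _ =>
        continuous_mul_log_sub_one.comp (hcoord i j)))

end EntropicTransport

theorem entropic_MK_unique_and_strictly_convex
    {I J : Type*} [Fintype I] [Fintype J]
    (ε : ℝ) (hε : 0 < ε)
    (μ : I → ℝ) (hμ0 : ∀ i, 0 < μ i) (hμ1 : ∑ i, μ i = 1)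
    (c : I → J → ℝ)
    (Plan : (J → ℝ) → Set (I → J → ℝ))
    (hPlan : ∀ ν, Plan ν =
      {γ | (∀ i j, 0 ≤ γ i j) ∧ (∀ i, ∑ j, γ i j = μ i) ∧ (∀ j, ∑ i, γ i j = ν j)})
    (obj : (I → J → ℝ) → ℝ)
    (hobj : ∀ γ, obj γ = ∑ i, ∑ j, c i j * γ i j
      + ε * ∑ i, ∑ j, γ i j * (Real.log (γ i j) - 1))
    (MKε : (J → ℝ) → ℝ)
    (hMKε : ∀ ν, MKε ν = sInf (obj '' Plan ν)) :
    (∀ ν : J → ℝ, (∀ j, 0 < ν j) → ∑ j, ν j = 1 →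
      ∃! γ : I → J → ℝ, γ ∈ Plan ν ∧ ∀ γ' ∈ Plan ν, obj γ ≤ obj γ') ∧
    StrictConvexOn ℝ {ν : J → ℝ | (∀ j, 0 < ν j) ∧ ∑ j, ν j = 1} MKε := by
  obtain rfl : Plan = transportPlans μ :=
    funext fun ν => (hPlan ν).trans (Set.ext fun _ => mem_transportPlans.symm)
  obtain rfl : obj = entropicCost c ε := funext hobj
  obtain rfl : MKε = fun ν => sInf (entropicCost c ε '' transportPlans μ ν) := funext hMKε
  have hconvex : StrictConvexOn ℝ (transportPlansFrom μ) (entropicCost c ε) :=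
    (strictConvexOn_entropicCost c hε).subset (fun γ hγ i _ j _ => hγ.1 i j)
      (convex_transportPlansFrom μ)
  have hmin : ∀ ν : J → ℝ, ν ∈ {ν : J → ℝ | (∀ j, 0 < ν j) ∧ ∑ j, ν j = 1} →
      ∃ γ ∈ transportPlans μ ν, IsMinOn (entropicCost c ε) (transportPlans μ ν) γ :=
    fun ν ⟨hν₀, hν₁⟩ => (isCompact_transportPlans μ ν).exists_isMinOn
      ⟨_, product_mem_transportPlans (fun i => (hμ0 i).le) hμ1 (fun j => (hν₀ j).le) hν₁⟩
      (continuous_entropicCost c ε).continuousOn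
  refine ⟨fun ν hν₀ hν₁ => ?_,
    hconvex.csInf_image_inter_preimage colSum convex_setOf_pos_sum_eq_one hmin⟩
  obtain ⟨γ, hγ, hγmin⟩ := hmin ν ⟨hν₀, hν₁⟩
  refine ⟨γ, ⟨hγ, isMinOn_iff.1 hγmin⟩, fun γ' ⟨hγ', hγ'min⟩ => ?_⟩
  exact (hconvex.subset Set.inter_subset_left (convex_transportPlans μ ν)).eq_of_isMinOn
    (isMinOn_iff.2 hγ'min) hγmin hγ' hγ
end

section
/- Let ε > 0 and let (γ, ν) with γ_{ij} > 0 minimize Σ_{ij} c_{ij} γ_{ij} + ε Σ_{ij} γ_{ij}(ln γ_{ij} − 1) + E(ν) over nonnegative γ with row sums μ and ν equal to the column sums of γ, where E is differentiable with ∂E/∂ν_j = f_j(ν_j) + Σ_k φ_{kj} ν_k. Then there exist a_i > 0 such that γ_{ij} = a_i · exp(−(c_{ij} + f_j(ν_j) + Σ_k φ_{kj} ν_k)/ε) for all i, j, where a_i = μ_i / Σ_{j'} exp(−(c_{ij'} + f_{j'}(ν_{j'}) + Σ_k φ_{kj'} ν_k)/ε). -/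
/-!
Moving mass `t` from `(i, j₂)` to `(i, j₁)` preserves the row constraints, so at an interior
minimiser the derivative in `t` vanishes:
`c i j + ε log γ i j + ∂ⱼE(ν)` takes the same value for `j = j₁` and `j = j₂`.
Only partial derivatives of `E` are given; the derivative of `E` along `e j₁ - e j₂` is still
available because the mixed second difference of `E` is the bilinear term `φ j₁ j₂ s x`.
Solving for `γ i j` gives the Gibbs form, and the row sums `μ i` fix the factor `a i`.
-/

open Finset Function

section Interaction

variable {J : Type*} [Fintype J] [DecidableEq J] {f : J → ℝ → ℝ} {φ : J → J → ℝ}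
  {E : (J → ℝ) → ℝ}

lemma hasDerivAt_apply_update_of_partial
    (hE : ∀ (ν : J → ℝ) (j : J),
      HasDerivAt (fun t => E (update ν j t)) (f j (ν j) + ∑ k, φ k j * ν k) (ν j))
    (w : J → ℝ) (j : J) (x : ℝ) :
    HasDerivAt (fun t => E (update w j t)) (f j x + ∑ k, φ k j * update w j x k) x := by
  simpa using hE (update w j x) j

/-- The partial derivative in `j₂` depends on the coordinate `j₁` only through the linear term
`φ j₁ j₂ * ν j₁`, so the mixed second difference of `E` is bilinear. -/
lemma apply_update_update
    (hE : ∀ (ν : J → ℝ) (j : J),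
      HasDerivAt (fun t => E (update ν j t)) (f j (ν j) + ∑ k, φ k j * ν k) (ν j))
    {j₁ j₂ : J} (hj : j₁ ≠ j₂) (ν : J → ℝ) (s x : ℝ) :
    E (update (update ν j₁ s) j₂ x)
      = E (update ν j₁ s) + E (update ν j₂ x) - E ν + φ j₁ j₂ * (s - ν j₁) * (x - ν j₂) := by
  set a := φ j₁ j₂ * (s - ν j₁)
  set g : ℝ → ℝ := fun y => E (update (update ν j₁ s) j₂ y) - E (update ν j₂ y) - a * y
  have hg : ∀ y, HasDerivAt g 0 y := by
    intro y
    have hshift : update (update ν j₁ s) j₂ y = update ν j₂ y + Pi.single j₁ (s - ν j₁) := by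
      rw [update_comm hj, Pi.update_eq_sub_add_single, update_of_ne hj, Pi.single_sub]
      abel
    refine (((hasDerivAt_apply_update_of_partial hE (update ν j₁ s) j₂ y).sub
      (hasDerivAt_apply_update_of_partial hE ν j₂ y)).sub
        ((hasDerivAt_id y).const_mul a)).congr_deriv ?_
    simp [hshift, mul_add, sum_add_distrib, Pi.single_apply, a]
  have hconst : g x = g (ν j₂) :=
    is_const_of_deriv_eq_zero (fun y => (hg y).differentiableAt) (fun y => (hg y).deriv) _ _
  have hback : update (update ν j₁ s) j₂ (ν j₂) = update ν j₁ s :=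
    update_eq_self_iff.2 (update_of_ne hj.symm _ _).symm
  simp only [g, hback, update_eq_self] at hconst
  linarith

lemma hasDerivAt_apply_add_smul_single_sub_single
    (hE : ∀ (ν : J → ℝ) (j : J),
      HasDerivAt (fun t => E (update ν j t)) (f j (ν j) + ∑ k, φ k j * ν k) (ν j))
    (ν : J → ℝ) (j₁ j₂ : J) :
    HasDerivAt (fun t : ℝ => E (ν + t • (Pi.single j₁ 1 - Pi.single j₂ 1)))
      ((f j₁ (ν j₁) + ∑ k, φ k j₁ * ν k) - (f j₂ (ν j₂) + ∑ k, φ k j₂ * ν k)) 0 := by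
  obtain rfl | hj := eq_or_ne j₁ j₂
  · simpa using hasDerivAt_const (0 : ℝ) (E ν)
  have hsplit : (fun t : ℝ => E (ν + t • (Pi.single j₁ 1 - Pi.single j₂ 1)))
      = fun t => E (update ν j₁ (ν j₁ + t)) + E (update ν j₂ (ν j₂ - t)) - E ν
          - φ j₁ j₂ * t ^ 2 := by
    funext t
    have hpert : ν + t • (Pi.single j₁ 1 - Pi.single j₂ 1)
        = update (update ν j₁ (ν j₁ + t)) j₂ (ν j₂ - t) := by
      ext k
      rcases eq_or_ne k j₂ with rfl | hk₂
      · simp [hj.symm, sub_eq_add_neg]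
      rcases eq_or_ne k j₁ with rfl | hk₁
      · simp [hk₂]
      · simp [hk₁, hk₂]
    rw [hpert, apply_update_update hE hj]
    ring
  have h₁ := HasDerivAt.comp_const_add (ν j₁) 0 (by rw [add_zero]; exact hE ν j₁)
  have h₂ := HasDerivAt.comp_const_sub (ν j₂) 0 (by rw [sub_zero]; exact hE ν j₂)
  have h₃ : HasDerivAt (fun t : ℝ => φ j₁ j₂ * t ^ 2) 0 0 := by
    simpa using (hasDerivAt_pow 2 (0 : ℝ)).const_mul (φ j₁ j₂)
  rw [hsplit]
  exact (((h₁.add h₂).sub_const (E ν)).sub h₃).congr_deriv (by ring)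

end Interaction

lemma hasDerivAt_mul_log_sub_one {x : ℝ} (hx : 0 < x) :
    HasDerivAt (fun y => y * (Real.log y - 1)) (Real.log x) x := by
  refine ((hasDerivAt_id x).mul ((Real.hasDerivAt_log hx.ne').sub_const 1)).congr_deriv ?_
  simp [hx.ne']

section Transport

variable {I J : Type*} [Fintype I] [Fintype J]

noncomputable def entropicEnergy (c : I → J → ℝ) (ε : ℝ) (E : (J → ℝ) → ℝ)
    (γ : I → J → ℝ) : ℝ :=
  ∑ i, ∑ j, c i j * γ i j + ε * ∑ i, ∑ j, γ i j * (Real.log (γ i j) - 1)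
    + E (fun j => ∑ i, γ i j)

lemma hasDerivAt_sum_sum_add_smul {h : I → J → ℝ → ℝ} {h' γ : I → J → ℝ}
    (hh : ∀ i j, HasDerivAt (h i j) (h' i j) (γ i j)) (δ : I → J → ℝ) :
    HasDerivAt (fun t : ℝ => ∑ i, ∑ j, h i j ((γ + t • δ) i j)) (∑ i, ∑ j, h' i j * δ i j) 0 :=
  HasDerivAt.fun_sum fun i _ => HasDerivAt.fun_sum fun j _ =>
    (hh i j).comp_of_eq 0 ((hasDerivAt_mul_const (δ i j)).const_add (γ i j))
      (by simp)

lemma hasDerivAt_entropicEnergy_add_smul {c : I → J → ℝ} {ε : ℝ} {E : (J → ℝ) → ℝ}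
    {γ δ : I → J → ℝ} {ν : J → ℝ} {D : ℝ} (hγ : ∀ i j, 0 < γ i j)
    (hν : ∀ j, ∑ i, γ i j = ν j)
    (hE : HasDerivAt (fun t : ℝ => E (ν + t • fun j => ∑ i, δ i j)) D 0) :
    HasDerivAt (fun t : ℝ => entropicEnergy c ε E (γ + t • δ))
      (∑ i, ∑ j, c i j * δ i j + ε * ∑ i, ∑ j, Real.log (γ i j) * δ i j + D) 0 := by
  have hcol : ∀ t : ℝ, (fun j => ∑ i, (γ + t • δ) i j) = ν + t • fun j => ∑ i, δ i j := by
    intro t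
    ext j
    simp [sum_add_distrib, mul_sum, hν]
  simp only [entropicEnergy, hcol]
  have hcost := hasDerivAt_sum_sum_add_smul
    (fun i j => (hasDerivAt_id' (γ i j)).const_mul (c i j)) δ
  have hentropy := hasDerivAt_sum_sum_add_smul
    (fun i j => hasDerivAt_mul_log_sub_one (hγ i j)) δ
  exact ((hcost.congr_deriv (by simp)).add (hentropy.const_mul ε)).add hE

lemma isLocalMin_add_smul {F : (I → J → ℝ) → ℝ} {γ δ : I → J → ℝ} (hγ : ∀ i j, 0 < γ i j)
    (hδ : ∀ i, ∑ j, δ i j = 0)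
    (hmin : ∀ γ' : I → J → ℝ, (∀ i j, 0 ≤ γ' i j) → (∀ i, ∑ j, γ' i j = ∑ j, γ i j) →
      F γ ≤ F γ') :
    IsLocalMin (fun t : ℝ => F (γ + t • δ)) 0 := by
  have hpos : ∀ᶠ t : ℝ in nhds 0, ∀ i j, 0 < γ i j + t * δ i j :=
    Filter.eventually_all.2 fun i => Filter.eventually_all.2 fun j =>
      (Continuous.tendsto (by fun_prop) 0).eventually_const_lt (by simpa using hγ i j)
  filter_upwards [hpos] with t ht
  rw [zero_smul, add_zero]
  refine hmin (γ + t • δ) (fun i j => by simpa using (ht i j).le) fun i => ?_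
  simp [sum_add_distrib, ← mul_sum, hδ]

end Transport

section RowTransfer

variable {I J : Type*} [DecidableEq I] [DecidableEq J]

noncomputable def rowTransfer (i : I) (j₁ j₂ : J) : I → J → ℝ :=
  Pi.single i (Pi.single j₁ 1 - Pi.single j₂ 1)

lemma sum_rowTransfer_row [Fintype J] (i i' : I) (j₁ j₂ : J) :
    ∑ j, rowTransfer i j₁ j₂ i' j = 0 := by
  rcases eq_or_ne i' i with rfl | hi
  · simp [rowTransfer]
  · simp [rowTransfer, hi]

variable [Fintype I]

lemma sum_rowTransfer_col (i : I) (j₁ j₂ : J) :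
    (fun j => ∑ i', rowTransfer i j₁ j₂ i' j) = Pi.single j₁ 1 - Pi.single j₂ 1 := by
  ext j
  rw [Fintype.sum_eq_single i fun i' hi => by simp [rowTransfer, hi]]
  simp [rowTransfer]

lemma sum_sum_mul_rowTransfer [Fintype J] (x : I → J → ℝ) (i : I) (j₁ j₂ : J) :
    ∑ i', ∑ j, x i' j * rowTransfer i j₁ j₂ i' j = x i j₁ - x i j₂ := by
  rw [Fintype.sum_eq_single i fun i' hi => by simp [rowTransfer, hi]]
  simp [rowTransfer, mul_sub, sum_sub_distrib, Pi.single_apply]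

end RowTransfer

theorem add_mul_log_eq_of_isMinOn_entropicEnergy {I J : Type*} [Fintype I] [Fintype J]
    [DecidableEq I] [DecidableEq J] {c : I → J → ℝ} {ε : ℝ} {f : J → ℝ → ℝ} {φ : J → J → ℝ}
    {E : (J → ℝ) → ℝ}
    (hE : ∀ (ν : J → ℝ) (j : J),
      HasDerivAt (fun t => E (update ν j t)) (f j (ν j) + ∑ k, φ k j * ν k) (ν j))
    {γ : I → J → ℝ} {ν : J → ℝ} (hγ : ∀ i j, 0 < γ i j) (hν : ∀ j, ∑ i, γ i j = ν j)
    (hmin : ∀ γ' : I → J → ℝ, (∀ i j, 0 ≤ γ' i j) → (∀ i, ∑ j, γ' i j = ∑ j, γ i j) →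
      entropicEnergy c ε E γ ≤ entropicEnergy c ε E γ')
    (i : I) (j₁ j₂ : J) :
    c i j₁ + f j₁ (ν j₁) + ∑ k, φ k j₁ * ν k + ε * Real.log (γ i j₁)
      = c i j₂ + f j₂ (ν j₂) + ∑ k, φ k j₂ * ν k + ε * Real.log (γ i j₂) := by
  have hloc := isLocalMin_add_smul (δ := rowTransfer i j₁ j₂) hγ
    (fun i' => sum_rowTransfer_row i i' j₁ j₂) hmin
  have hderiv := hasDerivAt_entropicEnergy_add_smul (c := c) (ε := ε)
    (δ := rowTransfer i j₁ j₂) hγ hν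
    (by rw [sum_rowTransfer_col]; exact hasDerivAt_apply_add_smul_single_sub_single hE ν j₁ j₂)
  have hzero := hloc.hasDerivAt_eq_zero hderiv
  simp only [sum_sum_mul_rowTransfer] at hzero
  linarith

lemma eq_exp_mul_exp_of_add_mul_log_eq {ε u x r : ℝ} (hε : ε ≠ 0) (hx : 0 < x)
    (h : u + ε * Real.log x = r) : x = Real.exp (r / ε) * Real.exp (-u / ε) := by
  rw [← Real.exp_add, ← h]
  nth_rewrite 1 [← Real.exp_log hx]
  congr 1
  field_simp
  ring

theorem gibbs_form_entropic_CN_general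
    {I J : Type*} [Fintype I] [Fintype J] [DecidableEq J]
    (ε : ℝ) (hε : 0 < ε)
    (μ : I → ℝ) (hμ1 : ∑ i, μ i = 1)
    (c : I → J → ℝ)
    (f : J → ℝ → ℝ) (φ : J → J → ℝ)
    (E : (J → ℝ) → ℝ)
    (hE : ∀ (ν : J → ℝ) (j : J),
      HasDerivAt (fun t => E (Function.update ν j t))
        (f j (ν j) + ∑ k, φ k j * ν k) (ν j))
    (γ : I → J → ℝ) (ν : J → ℝ)
    (hγpos : ∀ i j, 0 < γ i j)
    (hγ1 : ∀ i, ∑ j, γ i j = μ i)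
    (hγ2 : ∀ j, ∑ i, γ i j = ν j)
    (hmin : ∀ γ' : I → J → ℝ, (∀ i j, 0 ≤ γ' i j) → (∀ i, ∑ j, γ' i j = μ i) →
      (∑ i, ∑ j, c i j * γ i j + ε * ∑ i, ∑ j, γ i j * (Real.log (γ i j) - 1) + E ν)
      ≤ (∑ i, ∑ j, c i j * γ' i j + ε * ∑ i, ∑ j, γ' i j * (Real.log (γ' i j) - 1)
          + E (fun j => ∑ i, γ' i j))) :
    ∃ a : I → ℝ, (∀ i, 0 < a i) ∧
      (∀ i, a i = μ i / ∑ j', Real.exp (-(c i j' + f j' (ν j') + ∑ k, φ k j' * ν k) / ε)) ∧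
      (∀ i j, γ i j = a i * Real.exp (-(c i j + f j (ν j) + ∑ k, φ k j * ν k) / ε)) := by
  classical
  obtain ⟨j₀⟩ : Nonempty J := by
    by_contra hJ
    have : IsEmpty J := not_nonempty_iff.1 hJ
    simp [← hγ1] at hμ1
  have hfoc := add_mul_log_eq_of_isMinOn_entropicEnergy hE hγpos hγ2 fun γ' hγ'0 hγ'1 => by
    have := hmin γ' hγ'0 fun i => (hγ'1 i).trans (hγ1 i)
    rwa [← funext hγ2] at this
  set a : I → ℝ := fun i => Real.exp
    ((c i j₀ + f j₀ (ν j₀) + ∑ k, φ k j₀ * ν k + ε * Real.log (γ i j₀)) / ε)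
  have hgibbs : ∀ i j, γ i j = a i * Real.exp (-(c i j + f j (ν j) + ∑ k, φ k j * ν k) / ε) :=
    fun i j => eq_exp_mul_exp_of_add_mul_log_eq hε.ne' (hγpos i j) (hfoc i j j₀)
  refine ⟨a, fun i => Real.exp_pos _, fun i => ?_, hgibbs⟩
  have hZ : 0 < ∑ j', Real.exp (-(c i j' + f j' (ν j') + ∑ k, φ k j' * ν k) / ε) :=
    sum_pos (fun j _ => Real.exp_pos _) ⟨j₀, mem_univ j₀⟩
  rw [← hγ1 i, sum_congr rfl fun j _ => hgibbs i j, ← mul_sum, mul_div_cancel_right₀ _ hZ.ne']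

theorem gibbs_form_entropic_CN
    {I J : Type*} [Fintype I] [Fintype J] [DecidableEq J]
    (ε : ℝ) (hε : 0 < ε)
    (μ : I → ℝ) (hμ0 : ∀ i, 0 ≤ μ i) (hμ1 : ∑ i, μ i = 1)
    (c : I → J → ℝ)
    (f : J → ℝ → ℝ) (φ : J → J → ℝ) (hφ : ∀ k j, φ k j = φ j k)
    (E : (J → ℝ) → ℝ)
    (hE : ∀ (ν : J → ℝ) (j : J),
      HasDerivAt (fun t => E (Function.update ν j t))
        (f j (ν j) + ∑ k, φ k j * ν k) (ν j))
    (γ : I → J → ℝ) (ν : J → ℝ)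
    (hγpos : ∀ i j, 0 < γ i j)
    (hγ1 : ∀ i, ∑ j, γ i j = μ i)
    (hγ2 : ∀ j, ∑ i, γ i j = ν j)
    (hmin : ∀ γ' : I → J → ℝ, (∀ i j, 0 ≤ γ' i j) → (∀ i, ∑ j, γ' i j = μ i) →
      (∑ i, ∑ j, c i j * γ i j + ε * ∑ i, ∑ j, γ i j * (Real.log (γ i j) - 1) + E ν)
      ≤ (∑ i, ∑ j, c i j * γ' i j + ε * ∑ i, ∑ j, γ' i j * (Real.log (γ' i j) - 1)
          + E (fun j => ∑ i, γ' i j))) :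
    ∃ a : I → ℝ, (∀ i, 0 < a i) ∧
      (∀ i, a i = μ i / ∑ j', Real.exp (-(c i j' + f j' (ν j') + ∑ k, φ k j' * ν k) / ε)) ∧
      (∀ i j, γ i j = a i * Real.exp (-(c i j + f j (ν j) + ∑ k, φ k j * ν k) / ε)) :=
  gibbs_form_entropic_CN_general ε hε μ hμ1 c f φ E hE γ ν hγpos hγ1 hγ2 hmin
end

section
/- Let θ ∈ ℝ^{I×J} have positive entries, ε > 0, and h_j : ℝ → ℝ be nondecreasing and continuous for each j. Then for each j the scalar equation ν_j = (Σ_i θ_{ij}) · exp(−h_j(ν_j)/ε) has a unique positive solution ν_j, and the matrix γ_{ij} = θ_{ij} exp(−h_j(ν_j)/ε) satisfies Σ_i γ_{ij} = ν_j. -/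
open Finset

theorem congestion_prox_fixed_point
    {I J : Type*} [Fintype I] [Nonempty I] [Fintype J]
    (ε : ℝ) (hε : 0 < ε)
    (θ : I → J → ℝ) (hθ : ∀ i j, 0 < θ i j)
    (h : J → ℝ → ℝ) (hh_mono : ∀ j, Monotone (h j)) (hh_cont : ∀ j, Continuous (h j)) :
    (∀ j : J, ∃! t : ℝ, 0 < t ∧ t = (∑ i, θ i j) * Real.exp (-(h j t) / ε)) ∧
    (∀ ν : J → ℝ, (∀ j, ν j = (∑ i, θ i j) * Real.exp (-(h j (ν j)) / ε)) →
      ∀ j, ∑ i, θ i j * Real.exp (-(h j (ν j)) / ε) = ν j) := by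
  constructor
  · intro j
    set C : ℝ := ∑ i, θ i j with hCdef
    have hC : 0 < C := Finset.sum_pos (fun i _ => hθ i j) Finset.univ_nonempty
    set f : ℝ → ℝ := fun t => t - C * Real.exp (-(h j t) / ε) with hf
    have hfc : Continuous f := by
      continuity
    set M : ℝ := C * Real.exp (-(h j 0) / ε) + 1 with hM
    have hMpos : 0 ≤ M := by positivity
    have hf0 : f 0 < 0 := by
      simp only [hf]
      have : 0 < C * Real.exp (-(h j 0) / ε) := by positivity
      linarith
    have hfM : 0 < f M := by
      simp only [hf]
      have hh : h j 0 ≤ h j M := hh_mono j hMpos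
      have : Real.exp (-(h j M) / ε) ≤ Real.exp (-(h j 0) / ε) :=
        Real.exp_le_exp.mpr (div_le_div_of_nonneg_right (by linarith) hε.le)
      nlinarith [Real.exp_pos (-(h j M) / ε)]
    have := intermediate_value_Icc hMpos (hfc.continuousOn (s := Set.Icc 0 M))
    have h0mem : (0:ℝ) ∈ Set.Icc (f 0) (f M) := ⟨le_of_lt hf0, le_of_lt hfM⟩
    obtain ⟨t, _, ht⟩ := this h0mem
    have hteq : t = C * Real.exp (-(h j t) / ε) := by
      simp only [hf] at ht; linarith
    have htpos : 0 < t := by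
      rw [hteq]; positivity
    refine ⟨t, ⟨htpos, hteq⟩, ?_⟩
    rintro s ⟨hspos, hseq⟩
    by_contra hne
    rcases lt_or_gt_of_ne hne with hlt | hlt
    · have : h j s ≤ h j t := hh_mono j hlt.le
      have : C * Real.exp (-(h j t) / ε) ≤ C * Real.exp (-(h j s) / ε) := by
        apply mul_le_mul_of_nonneg_left _ hC.le
        exact Real.exp_le_exp.mpr (by apply div_le_div_of_nonneg_right (by linarith) hε.le)
      rw [← hseq, ← hteq] at this; linarith
    · have : h j t ≤ h j s := hh_mono j hlt.le
      have : C * Real.exp (-(h j s) / ε) ≤ C * Real.exp (-(h j t) / ε) := by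
        apply mul_le_mul_of_nonneg_left _ hC.le
        exact Real.exp_le_exp.mpr (by apply div_le_div_of_nonneg_right (by linarith) hε.le)
      rw [← hseq, ← hteq] at this; linarith
  · intro ν hν j
    rw [← Finset.sum_mul]
    exact (hν j).symm
end

section
/- If the energy E is convex and C¹ on a neighborhood of the probability simplex P(Y), then ν solves min_{ν∈P(Y)} MK(ν) + E(ν) if and only if 0 ∈ ∂M̄K(ν) + ∇E(ν), where M̄K is the extension of MK by +∞ outside P(Y); consequently in the convex case every Cournot-Nash equilibrium arises from a minimizer. -/
open Finset

theorem convex_case_minimizer_iff_first_order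
    {J : Type*} [Fintype J]
    (S : Set (J → ℝ))
    (hS : S = {ν : J → ℝ | (∀ j, 0 ≤ ν j) ∧ ∑ j, ν j = 1})
    (MK : (J → ℝ) → ℝ)
    (hMKconv : ConvexOn ℝ S MK)
    (U : Set (J → ℝ)) (hU : IsOpen U) (hSU : S ⊆ U)
    (E : (J → ℝ) → ℝ) (E' : (J → ℝ) → J → ℝ)
    (hEconv : ConvexOn ℝ U E)
    (hE : ∀ x ∈ U, ∀ y : J → ℝ,
      HasDerivAt (fun t : ℝ => E (x + t • y)) (∑ j, E' x j * y j) 0)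
    (hE'cont : ContinuousOn (fun x => E' x) U)
    (ν : J → ℝ) (hν : ν ∈ S) :
    (∀ y ∈ S, MK ν + E ν ≤ MK y + E y) ↔
    (∀ y ∈ S, MK ν + ∑ j, (-(E' ν j)) * (y j - ν j) ≤ MK y) := by
  subst hS
  have hSconv : Convex ℝ {ν : J → ℝ | (∀ j, 0 ≤ ν j) ∧ ∑ j, ν j = 1} :=
    convex_stdSimplex ℝ J
  have setup : ∀ y ∈ {ν : J → ℝ | (∀ j, 0 ≤ ν j) ∧ ∑ j, ν j = 1},
      Filter.Tendsto (fun t : ℝ => (E (ν + t • (y - ν)) - E ν) / t) (nhdsWithin 0 (Set.Ioi 0))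
        (nhds (∑ j, E' ν j * (y j - ν j))) := by
    intro y _
    have hder : HasDerivAt (fun t : ℝ => E (ν + t • (y - ν))) (∑ j, E' ν j * (y j - ν j)) 0 := by
      have := hE ν (hSU hν) (y - ν)
      simpa using this
    have h1 := hasDerivAt_iff_tendsto_slope.mp hder
    have h2 := h1.mono_left (nhdsWithin_mono _ (fun t ht => ne_of_gt ht))
    refine h2.congr (fun t => ?_)
    simp [slope_def_field, div_eq_inv_mul]
  have hcomb : ∀ (y : J → ℝ) (t : ℝ), ν + t • (y - ν) = (1 - t) • ν + t • y := by
    intro y t; funext j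
    simp only [Pi.add_apply, Pi.smul_apply, Pi.sub_apply, smul_eq_mul]
    ring
  have hmem : ∀ y ∈ {ν : J → ℝ | (∀ j, 0 ≤ ν j) ∧ ∑ j, ν j = 1}, ∀ t ∈ Set.Ioo (0:ℝ) 1,
      (1 - t) • ν + t • y ∈ {ν : J → ℝ | (∀ j, 0 ≤ ν j) ∧ ∑ j, ν j = 1} := by
    intro y hy t ht
    exact hSconv hν hy (show (0:ℝ) ≤ 1 - t by linarith [ht.2]) (show (0:ℝ) ≤ t from le_of_lt ht.1) (by ring)
  constructor
  · intro hmin y hy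
    have key : ∀ᶠ t in nhdsWithin (0:ℝ) (Set.Ioi 0),
        MK ν - MK y ≤ (E (ν + t • (y - ν)) - E ν) / t := by
      filter_upwards [Ioo_mem_nhdsGT_of_mem (Set.left_mem_Ico.mpr one_pos)] with t ht
      have hmemt := hmem y hy t ht
      have hMK := hMKconv.2 hν hy (show (0:ℝ) ≤ 1 - t by linarith [ht.2]) (show (0:ℝ) ≤ t from le_of_lt ht.1) (by ring)
      have hm := hmin _ hmemt
      rw [← hcomb y t] at hmemt hMK hm
      rw [le_div_iff₀ ht.1]
      simp only [smul_eq_mul] at hMK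
      nlinarith
    have hlim := ge_of_tendsto (setup y hy) key
    have : ∑ j, (-(E' ν j)) * (y j - ν j) = -∑ j, E' ν j * (y j - ν j) := by
      rw [← Finset.sum_neg_distrib]; exact Finset.sum_congr rfl (fun j _ => by ring)
    rw [this]; linarith
  · intro hfo y hy
    have key : ∀ᶠ t in nhdsWithin (0:ℝ) (Set.Ioi 0),
        (E (ν + t • (y - ν)) - E ν) / t ≤ E y - E ν := by
      filter_upwards [Ioo_mem_nhdsGT_of_mem (Set.left_mem_Ico.mpr one_pos)] with t ht
      have hmemt := hmem y hy t ht
      have hEc := hEconv.2 (hSU hν) (hSU hy) (show (0:ℝ) ≤ 1 - t by linarith [ht.2]) (show (0:ℝ) ≤ t from le_of_lt ht.1) (by ring)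
      rw [← hcomb y t] at hEc
      rw [div_le_iff₀ ht.1]
      simp only [smul_eq_mul] at hEc
      nlinarith
    have hlim := le_of_tendsto (setup y hy) key
    have hfoy := hfo y hy
    have : ∑ j, (-(E' ν j)) * (y j - ν j) = -∑ j, E' ν j * (y j - ν j) := by
      rw [← Finset.sum_neg_distrib]; exact Finset.sum_congr rfl (fun j _ => by ring)
    rw [this] at hfoy
    linarith
end
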